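/- arXiv:0707.2421 — 4 statements merged into one kernel-verified Lean document; each statement's English description precedes it below -/
import Mathlib

section
/- Fix integers a, b ≥ 0 and let P be the poset with elements w_{1,j}, w_{2,j}, w_{3,j}, w_{4,j} for 1 ≤ j ≤ b and z_{1,j}, z_{2,j}, z_{3,j} for b+1 ≤ j ≤ a+b, whose partial order is generated by: the chain relations w_{4,j} < w_{3,j} < w_{2,j} < w_{1,j} for 1 ≤ j ≤ b and z_{3,j} < z_{2,j} < z_{1,j} for b+1 ≤ j ≤ a+b; the relations w_{4,j} < w_{4,j+1}, w_{2,j} < w_{3,j+1}, and w_{1,j} < w_{1,j+1} for 1 ≤ j ≤ b−1; the relations w_{4,b} < z_{2,b+1} and w_{2,b} < z_{1,b+1} when a ≥ 1 and b ≥ 1; and the relations z_{3,j} < z_{3,j+1}, z_{2,j} < z_{2,j+1}, and z_{1,j} < z_{1,j+1} for b+1 ≤ j ≤ a+b−1 (this is the C2-semistandard poset P_{C2}^{βα}(a,b)). For an order ideal I of P define tableau(I) to be the tableau of shape (a,b) whose j-th column, for 1 ≤ j ≤ b, is (3,4), (2,4), (2,3), (1,3), (1,2) according as the cardinality of I ∩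 {w_{1,j}, w_{2,j}, w_{3,j}, w_{4,j}} is 0, 1, 2, 3, 4, and whose j-th column, for b+1 ≤ j ≤ a+b, is (4), (3), (2), (1) according as the cardinality of I ∩ {z_{1,j}, z_{2,j}, z_{3,j}} is 0, 1, 2, 3. Then the map I ↦ tableau(I) is a bijection from the set of order ideals of P onto S_C2(a,b). -/
/-- A filling of the shape with `b` columns of length two (each recorded as
(top entry, bottom entry)) followed by `a` columns of length one. -/
abbrev TabT (a b : ℕ) : Type := (Fin b → ℕ × ℕ) × (Fin a → ℕ)

/-- `n_k(T)`: the number of entries of the tableau `T` equal to `k`. -/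
def nkOf {m n : ℕ} (T : (Fin m → ℕ × ℕ) × (Fin n → ℕ)) (k : ℕ) : ℕ :=
  (Finset.univ.filter fun j : Fin m => (T.1 j).1 = k).card +
    (Finset.univ.filter fun j : Fin m => (T.1 j).2 = k).card +
    (Finset.univ.filter fun i : Fin n => T.2 i = k).card

/-- The set of `A2`-semistandard tableaux of shape `(a,b)`: entries from `{1,2,3}`,
rows weakly increasing, columns strictly increasing. -/
def SA2 (a b : ℕ) : Set (TabT a b) :=
  {T | (∀ j : Fin b, 1 ≤ (T.1 j).1 ∧ (T.1 j).1 ≤ 3 ∧ 1 ≤ (T.1 j).2 ∧ (T.1 j).2 ≤ 3 ∧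
          (T.1 j).1 < (T.1 j).2) ∧
       (∀ i : Fin a, 1 ≤ T.2 i ∧ T.2 i ≤ 3) ∧
       (∀ j j' : Fin b, j ≤ j' → (T.1 j).1 ≤ (T.1 j').1 ∧ (T.1 j).2 ≤ (T.1 j').2) ∧
       (∀ i i' : Fin a, i ≤ i' → T.2 i ≤ T.2 i') ∧
       (∀ (j : Fin b) (i : Fin a), (T.1 j).1 ≤ T.2 i)}

/-- The set of `C2`-semistandard tableaux of shape `(a,b)`: entries from `{1,2,3,4}`,
rows weakly increasing, columns strictly increasing, no column equal to `(1,4)`,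
and at most one column equal to `(2,3)`. -/
def SC2 (a b : ℕ) : Set (TabT a b) :=
  {T | (∀ j : Fin b, 1 ≤ (T.1 j).1 ∧ (T.1 j).1 ≤ 4 ∧ 1 ≤ (T.1 j).2 ∧ (T.1 j).2 ≤ 4 ∧
          (T.1 j).1 < (T.1 j).2) ∧
       (∀ i : Fin a, 1 ≤ T.2 i ∧ T.2 i ≤ 4) ∧
       (∀ j j' : Fin b, j ≤ j' → (T.1 j).1 ≤ (T.1 j').1 ∧ (T.1 j).2 ≤ (T.1 j').2) ∧
       (∀ i i' : Fin a, i ≤ i' → T.2 i ≤ T.2 i') ∧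
       (∀ (j : Fin b) (i : Fin a), (T.1 j).1 ≤ T.2 i) ∧
       (∀ j : Fin b, T.1 j ≠ (1, 4)) ∧
       (∀ j j' : Fin b, T.1 j = (2, 3) → T.1 j' = (2, 3) → j = j')}

/-- The restrictions of Figure 4.5 on a pair of adjacent length-two columns of a
`G2`-semistandard tableau. -/
def g2pair2 (c c' : ℕ × ℕ) : Prop :=
  (c = (1, 4) → c' ≠ (1, 4) ∧ c' ≠ (1, 5) ∧ c' ≠ (1, 6) ∧ c' ≠ (1, 7)) ∧
  (c = (1, 5) → c' ≠ (1, 5) ∧ c' ≠ (1, 6) ∧ c' ≠ (1, 7)) ∧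
  (c = (1, 6) → c' ≠ (1, 6) ∧ c' ≠ (1, 7) ∧ c' ≠ (2, 6) ∧ c' ≠ (2, 7)) ∧
  (c = (2, 6) → c' ≠ (2, 6) ∧ c' ≠ (2, 7)) ∧
  (c = (1, 7) → c' ≠ (1, 7) ∧ c' ≠ (2, 7) ∧ c' ≠ (3, 7) ∧ c' ≠ (4, 7)) ∧
  (c = (2, 7) → c' ≠ (2, 7) ∧ c' ≠ (3, 7) ∧ c' ≠ (4, 7)) ∧
  (c = (3, 7) → c' ≠ (3, 7) ∧ c' ≠ (4, 7)) ∧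
  (c = (4, 7) → c' ≠ (4, 7))

/-- The restrictions of Figure 4.5 on a length-two column followed by a
length-one column in a `G2`-semistandard tableau. -/
def g2pair1 (c : ℕ × ℕ) (e : ℕ) : Prop :=
  (c = (1, 4) → e ≠ 1) ∧
  (c = (1, 5) → e ≠ 1) ∧
  (c = (1, 6) → e ≠ 1 ∧ e ≠ 2) ∧
  (c = (2, 6) → e ≠ 2) ∧
  (c = (1, 7) → e ≠ 1 ∧ e ≠ 2 ∧ e ≠ 3 ∧ e ≠ 4) ∧
  (c = (2, 7) → e ≠ 2 ∧ e ≠ 3 ∧ e ≠ 4) ∧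
  (c = (3, 7) → e ≠ 3 ∧ e ≠ 4) ∧
  (c = (4, 7) → e ≠ 4)

/-- The set of `G2`-semistandard tableaux of shape `(a,b)`. -/
def SG2 (a b : ℕ) : Set (TabT a b) :=
  {T | (∀ j : Fin b, 1 ≤ (T.1 j).1 ∧ (T.1 j).1 ≤ 7 ∧ 1 ≤ (T.1 j).2 ∧ (T.1 j).2 ≤ 7 ∧
          (T.1 j).1 < (T.1 j).2) ∧
       (∀ i : Fin a, 1 ≤ T.2 i ∧ T.2 i ≤ 7) ∧
       (∀ j j' : Fin b, j ≤ j' → (T.1 j).1 ≤ (T.1 j').1 ∧ (T.1 j).2 ≤ (T.1 j').2) ∧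
       (∀ i i' : Fin a, i ≤ i' → T.2 i ≤ T.2 i') ∧
       (∀ (j : Fin b) (i : Fin a), (T.1 j).1 ≤ T.2 i) ∧
       (∀ i i' : Fin a, T.2 i = 4 → T.2 i' = 4 → i = i') ∧
       (∀ j : Fin b, T.1 j ≠ (2, 3) ∧ T.1 j ≠ (2, 4) ∧ T.1 j ≠ (3, 4) ∧ T.1 j ≠ (3, 5) ∧
          T.1 j ≠ (4, 5) ∧ T.1 j ≠ (4, 6) ∧ T.1 j ≠ (5, 6)) ∧
       (∀ j j' : Fin b, (j' : ℕ) = (j : ℕ) + 1 → g2pair2 (T.1 j) (T.1 j')) ∧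
       (∀ (j : Fin b) (i : Fin a), (j : ℕ) + 1 = b → (i : ℕ) = 0 → g2pair1 (T.1 j) (T.2 i))}

/-- An order ideal of the poset generated by the covering relations `r`:
a subset closed downward under the reflexive-transitive closure of `r`. -/
def IsIdealOf {V : Type*} (r : V → V → Prop) (I : Set V) : Prop :=
  ∀ x y : V, Relation.ReflTransGen r x y → y ∈ I → x ∈ I

/-- The elements of the `C2`-semistandard poset `P_C2^{βα}(a,b)`:
`Sum.inl (i, j)` is `w_{i+1, j+1}` (`i : Fin 4`, `j : Fin b`) and
`Sum.inr (i, j)` is `z_{i+1, b+1+j}` (`i : Fin 3`, `j : Fin a`). -/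
abbrev VC2 (a b : ℕ) : Type := (Fin 4 × Fin b) ⊕ (Fin 3 × Fin a)

/-- The generating relations of the `C2`-semistandard poset `P_C2^{βα}(a,b)`:
`w_{4,j} < w_{3,j} < w_{2,j} < w_{1,j}`, `z_{3,j} < z_{2,j} < z_{1,j}`,
`w_{4,j} < w_{4,j+1}`, `w_{2,j} < w_{3,j+1}`, `w_{1,j} < w_{1,j+1}`,
`w_{4,b} < z_{2,b+1}`, `w_{2,b} < z_{1,b+1}`, and `z_{i,j} < z_{i,j+1}`. -/
def relC2 (a b : ℕ) : VC2 a b → VC2 a b → Prop := fun x y =>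
  match x, y with
  | Sum.inl (i, j), Sum.inl (i', j') =>
      ((j : ℕ) = (j' : ℕ) ∧ (i : ℕ) = (i' : ℕ) + 1) ∨
      ((j' : ℕ) = (j : ℕ) + 1 ∧
        (((i : ℕ) = 3 ∧ (i' : ℕ) = 3) ∨ ((i : ℕ) = 1 ∧ (i' : ℕ) = 2) ∨
          ((i : ℕ) = 0 ∧ (i' : ℕ) = 0)))
  | Sum.inl (i, j), Sum.inr (i', j') =>
      (j : ℕ) + 1 = b ∧ (j' : ℕ) = 0 ∧
        (((i : ℕ) = 3 ∧ (i' : ℕ) = 1) ∨ ((i : ℕ) = 1 ∧ (i' : ℕ) = 0))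
  | Sum.inr (i, j), Sum.inr (i', j') =>
      ((j : ℕ) = (j' : ℕ) ∧ (i : ℕ) = (i' : ℕ) + 1) ∨
      ((j' : ℕ) = (j : ℕ) + 1 ∧ (i : ℕ) = (i' : ℕ))
  | Sum.inr _, Sum.inl _ => False

/-- The tableau associated to an order ideal `I` of `P_C2^{βα}(a,b)`: the `j`-th
length-two column is `(3,4)`, `(2,4)`, `(2,3)`, `(1,3)`, `(1,2)` according as
`|I ∩ {w_{1,j}, w_{2,j}, w_{3,j}, w_{4,j}}|` is `0`, `1`, `2`, `3`, `4`, and the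
`(b+k)`-th (length-one) column is `(4)`, `(3)`, `(2)`, `(1)` according as
`|I ∩ {z_{1,b+k}, z_{2,b+k}, z_{3,b+k}}|` is `0`, `1`, `2`, `3`. -/
noncomputable def tabC2 (a b : ℕ) (I : Set (VC2 a b)) : TabT a b :=
  (fun j : Fin b =>
    (fun n : ℕ =>
        if n = 0 then ((3 : ℕ), (4 : ℕ)) else if n = 1 then (2, 4)
        else if n = 2 then (2, 3) else if n = 3 then (1, 3) else (1, 2))
      ((I ∩ {Sum.inl ((0 : Fin 4), j), Sum.inl ((1 : Fin 4), j),
             Sum.inl ((2 : Fin 4), j), Sum.inl ((3 : Fin 4), j)}).ncard),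
   fun k : Fin a =>
    (fun n : ℕ =>
        if n = 0 then (4 : ℕ) else if n = 1 then 3 else if n = 2 then 2 else 1)
      ((I ∩ {Sum.inr ((0 : Fin 3), k), Sum.inr ((1 : Fin 3), k),
             Sum.inr ((2 : Fin 3), k)}).ncard))

/-!
An order ideal meets each column chain `w_{4,j} < ⋯ < w_{1,j}` or `z_{3,j} < ⋯ < z_{1,j}` in an
initial segment, so it is determined by the sizes of these segments, its levels `c j ≤ 4` and
`d k ≤ 3`. Conversely every choice of levels defines a set, which is an ideal exactly when the
generating relations between adjacent columns hold (`IsIdealLevels`). On the tableau side,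
`tabC2` reads each column off its level through a bijection onto the admissible columns, and the
conditions defining `S_C2(a,b)` reduce to conditions on adjacent columns, because "componentwise
smaller and not both `(2,3)`" is a transitive relation on columns. Through the column bijections
these adjacent conditions are exactly `IsIdealLevels`.
-/

open Set Function

lemma isIdealOf_iff_forall_rel {V : Type*} {r : V → V → Prop} {I : Set V} :
    IsIdealOf r I ↔ ∀ x y, r x y → y ∈ I → x ∈ I := by
  refine ⟨fun h x y hxy => h x y (.single hxy), fun h x y hxy => ?_⟩
  induction hxy with
  | refl => exact id
  | tail _ hyz ih => exact fun hz => ih (h _ _ hyz hz)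

lemma Fin.rel_of_forall_rel_succ_of_lt {β : Type*} (r : β → β → Prop) [IsTrans β r] {n : ℕ}
    {f : Fin n → β} (h : ∀ i j : Fin n, (j : ℕ) = i + 1 → r (f i) (f j)) {i j : Fin n}
    (hij : i < j) : r (f i) (f j) := by
  obtain ⟨j, hj⟩ := j
  induction j with
  | zero => exact absurd (Fin.lt_def.mp hij) (Nat.not_lt_zero _)
  | succ m ih =>
    have hstep := h ⟨m, by omega⟩ ⟨m + 1, hj⟩ rfl
    have him : (i : ℕ) ≤ m := Nat.lt_succ_iff.mp (Fin.lt_def.mp hij)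
    rcases him.lt_or_eq with hlt | heq
    · exact _root_.trans (ih (by omega) (Fin.lt_def.mpr hlt)) hstep
    · rwa [show i = ⟨m, by omega⟩ from Fin.ext heq]

lemma Fin.le_add_ncard_iff {n : ℕ} {p : Fin n → Prop} (hp : Monotone p) (i : Fin n) :
    n ≤ i + {i | p i}.ncard ↔ p i := by
  constructor
  · intro h
    by_contra hi
    have hsub : {i | p i} ⊆ Ioi i := fun i' hi' => lt_of_not_ge fun hle => hi (hp hle hi')
    have hcard := ncard_le_ncard hsub
    rw [← Finset.coe_Ioi, ncard_coe_finset, Fin.card_Ioi] at hcard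
    omega
  · intro hi
    have hsub : Ici i ⊆ {i | p i} := fun i' hle => hp hle hi
    have hcard := ncard_le_ncard hsub
    rw [← Finset.coe_Ici, ncard_coe_finset, Fin.card_Ici] at hcard
    omega

lemma Fin.ncard_setOf_le_add {n c : ℕ} (hc : c ≤ n) : {i : Fin n | n ≤ i + c}.ncard = c := by
  have hmono : Monotone fun i : Fin n => n ≤ i + c := fun i i' hle h => by
    have := Fin.le_def.mp hle; omega
  have hiff := Fin.le_add_ncard_iff hmono
  have hN : {i : Fin n | n ≤ i + c}.ncard ≤ n := by
    simpa using ncard_le_card {i : Fin n | n ≤ i + c}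
  set N := {i : Fin n | n ≤ i + c}.ncard
  by_contra hne
  have := hiff ⟨n - max N c, by omega⟩
  simp only at this
  omega

lemma ncard_inter_range_of_injective {α ι : Type*} {f : ι → α} (hf : Injective f) (s : Set α) :
    (s ∩ range f).ncard = {i | f i ∈ s}.ncard := by
  rw [← image_preimage_eq_inter_range, ncard_image_of_injective _ hf]
  rfl

def c2Column (n : ℕ) : ℕ × ℕ :=
  if n = 0 then (3, 4) else if n = 1 then (2, 4) else if n = 2 then (2, 3)
  else if n = 3 then (1, 3) else (1, 2)

def c2Entry (n : ℕ) : ℕ :=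
  if n = 0 then 4 else if n = 1 then 3 else if n = 2 then 2 else 1

def IsC2Column (p : ℕ × ℕ) : Prop :=
  1 ≤ p.1 ∧ p.1 ≤ 4 ∧ 1 ≤ p.2 ∧ p.2 ≤ 4 ∧ p.1 < p.2 ∧ p ≠ (1, 4)

def C2ColumnLE (p q : ℕ × ℕ) : Prop :=
  p.1 ≤ q.1 ∧ p.2 ≤ q.2 ∧ (p = (2, 3) → q ≠ (2, 3))

instance : IsTrans (ℕ × ℕ) C2ColumnLE where
  trans := by
    rintro ⟨p₁, p₂⟩ ⟨q₁, q₂⟩ ⟨r₁, r₂⟩ ⟨h₁, h₂, h₃⟩ ⟨h₄, h₅, -⟩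
    refine ⟨h₁.trans h₄, h₂.trans h₅, fun hp hr => h₃ hp ?_⟩
    simp only [Prod.mk.injEq] at *
    omega

lemma bijOn_c2Column : BijOn c2Column (Iic 4) {p | IsC2Column p} := by
  refine ⟨fun n hn => ?_, fun m hm n hn h => ?_, fun ⟨x, y⟩ ⟨hx, hx', hy, hy', hxy, hne⟩ => ?_⟩
  · simp only [mem_Iic] at hn
    interval_cases n <;> simp [IsC2Column, c2Column]
  · simp only [mem_Iic] at hm hn
    interval_cases m <;> interval_cases n <;> simp_all [c2Column]
  · simp only at hx hx' hy hy' hxy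
    interval_cases x <;> interval_cases y <;>
      first | omega | exact absurd rfl hne | (simp only [mem_image, mem_Iic]; decide)

lemma bijOn_c2Entry : BijOn c2Entry (Iic 3) (Icc 1 4) := by
  refine ⟨fun n hn => ?_, fun m hm n hn h => ?_, fun e he => ?_⟩
  · simp only [mem_Iic] at hn
    interval_cases n <;> decide
  · simp only [mem_Iic] at hm hn
    interval_cases m <;> interval_cases n <;> simp_all [c2Entry]
  · simp only [mem_Icc] at he
    exact ⟨4 - e, by simp only [mem_Iic]; omega, by unfold c2Entry; split_ifs <;> omega⟩

lemma c2ColumnLE_c2Column_iff {m n : ℕ} (hm : m ≤ 4) (hn : n ≤ 4) :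
    C2ColumnLE (c2Column m) (c2Column n) ↔
      (1 ≤ n → 1 ≤ m) ∧ (2 ≤ n → 3 ≤ m) ∧ (4 ≤ n → 4 ≤ m) := by
  interval_cases m <;> interval_cases n <;> simp [C2ColumnLE, c2Column]

lemma c2Entry_le_c2Entry_iff {m n : ℕ} (hm : m ≤ 3) (hn : n ≤ 3) :
    c2Entry m ≤ c2Entry n ↔ n ≤ m := by
  interval_cases m <;> interval_cases n <;> decide

lemma c2Column_fst_le_c2Entry_iff {m n : ℕ} (hm : m ≤ 4) (hn : n ≤ 3) :
    (c2Column m).1 ≤ c2Entry n ↔ (2 ≤ n → 1 ≤ m) ∧ (3 ≤ n → 3 ≤ m) := by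
  interval_cases m <;> interval_cases n <;> decide

lemma mem_SC2_iff {a b : ℕ} {T : TabT a b} :
    T ∈ SC2 a b ↔
      (∀ j, IsC2Column (T.1 j)) ∧ (∀ k, T.2 k ∈ Icc 1 4) ∧
      (∀ j j' : Fin b, (j' : ℕ) = j + 1 → C2ColumnLE (T.1 j) (T.1 j')) ∧
      (∀ k k' : Fin a, (k' : ℕ) = k + 1 → T.2 k ≤ T.2 k') ∧
      (∀ (j : Fin b) (k : Fin a), (j : ℕ) + 1 = b → (k : ℕ) = 0 → (T.1 j).1 ≤ T.2 k) := by
  constructor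
  · rintro ⟨hcol, hent, hrow, hzrow, hwz, h14, h23⟩
    refine ⟨fun j => ?_, hent, fun j j' hj => ?_, fun k k' hk => hzrow k k' (by omega),
      fun j k _ _ => hwz j k⟩
    · obtain ⟨h₁, h₂, h₃, h₄, h₅⟩ := hcol j
      exact ⟨h₁, h₂, h₃, h₄, h₅, h14 j⟩
    · obtain ⟨h₁, h₂⟩ := hrow j j' (Fin.le_def.mpr (by omega))
      exact ⟨h₁, h₂, fun hj₂₃ hj'₂₃ => by have := h23 j j' hj₂₃ hj'₂₃; omega⟩
  · rintro ⟨hcol, hent, hrow, hzrow, hwz⟩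
    have hrow_lt : ∀ j j' : Fin b, j < j' → C2ColumnLE (T.1 j) (T.1 j') :=
      fun j j' => Fin.rel_of_forall_rel_succ_of_lt C2ColumnLE (f := T.1) hrow
    have hrow_le : ∀ j j' : Fin b, j ≤ j' →
        (T.1 j).1 ≤ (T.1 j').1 ∧ (T.1 j).2 ≤ (T.1 j').2 := fun j j' hjj' => by
      rcases hjj'.lt_or_eq with hlt | rfl
      · exact ⟨(hrow_lt j j' hlt).1, (hrow_lt j j' hlt).2.1⟩
      · exact ⟨le_rfl, le_rfl⟩
    have hzrow_le : ∀ k k' : Fin a, k ≤ k' → T.2 k ≤ T.2 k' := fun k k' hkk' => by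
      rcases hkk'.lt_or_eq with hlt | rfl
      · exact Fin.rel_of_forall_rel_succ_of_lt (· ≤ ·) (f := T.2) hzrow hlt
      · exact le_rfl
    refine ⟨fun j => (hcol j).imp_right fun h => ?_, fun k => hent k, hrow_le, hzrow_le,
      fun j k => ?_, fun j => (hcol j).2.2.2.2.2, fun j j' hj hj' => ?_⟩
    · exact ⟨h.1, h.2.1, h.2.2.1, h.2.2.2.1⟩
    · have hlast : b - 1 < b := by have := j.isLt; omega
      calc (T.1 j).1 ≤ (T.1 ⟨b - 1, hlast⟩).1 :=
            (hrow_le j _ (Fin.le_def.mpr (show (j : ℕ) ≤ b - 1 by omega))).1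
        _ ≤ T.2 ⟨0, k.pos⟩ := hwz _ _ (by simp only; omega) rfl
        _ ≤ T.2 k := hzrow_le _ k (Fin.le_def.mpr (Nat.zero_le _))
    · by_contra hne
      rcases lt_or_gt_of_ne hne with hlt | hlt
      · exact (hrow_lt j j' hlt).2.2 hj hj'
      · exact (hrow_lt j' j hlt).2.2 hj' hj

section Levels

variable {a b : ℕ}

abbrev Levels (a b : ℕ) : Type := (Fin b → ℕ) × (Fin a → ℕ)

/-- The set made of the bottom `x.1 j` elements of each `w`-column and the bottom `x.2 k`
elements of each `z`-column. -/
def levelSet (x : Levels a b) : Set (VC2 a b) :=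
  {v | Sum.elim (fun p => 4 ≤ (p.1 : ℕ) + x.1 p.2) (fun p => 3 ≤ (p.1 : ℕ) + x.2 p.2) v}

noncomputable def levels (I : Set (VC2 a b)) : Levels a b :=
  (fun j => (I ∩ {Sum.inl ((0 : Fin 4), j), Sum.inl ((1 : Fin 4), j),
      Sum.inl ((2 : Fin 4), j), Sum.inl ((3 : Fin 4), j)}).ncard,
   fun k => (I ∩ {Sum.inr ((0 : Fin 3), k), Sum.inr ((1 : Fin 3), k),
      Sum.inr ((2 : Fin 3), k)}).ncard)

def tabOfLevels (x : Levels a b) : TabT a b := (c2Column ∘ x.1, c2Entry ∘ x.2)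

def levelBox (a b : ℕ) : Set (Levels a b) := {x | (∀ j, x.1 j ≤ 4) ∧ ∀ k, x.2 k ≤ 3}

/-- The generating relations between distinct columns in terms of levels: `w_{4,j} < w_{4,j+1}`,
`w_{2,j} < w_{3,j+1}` and `w_{1,j} < w_{1,j+1}`; `z_{i,k} < z_{i,k+1}`; `w_{4,b} < z_{2,b+1}` and
`w_{2,b} < z_{1,b+1}`. -/
def IsIdealLevels (x : Levels a b) : Prop :=
  (∀ j j' : Fin b, (j' : ℕ) = j + 1 →
      (1 ≤ x.1 j' → 1 ≤ x.1 j) ∧ (2 ≤ x.1 j' → 3 ≤ x.1 j) ∧ (4 ≤ x.1 j' → 4 ≤ x.1 j)) ∧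
  (∀ k k' : Fin a, (k' : ℕ) = k + 1 → x.2 k' ≤ x.2 k) ∧
  (∀ (j : Fin b) (k : Fin a), (j : ℕ) + 1 = b → (k : ℕ) = 0 →
      (2 ≤ x.2 k → 1 ≤ x.1 j) ∧ (3 ≤ x.2 k → 3 ≤ x.1 j))

@[simp] lemma mem_levelSet_inl {x : Levels a b} {i : Fin 4} {j : Fin b} :
    Sum.inl (i, j) ∈ levelSet x ↔ 4 ≤ (i : ℕ) + x.1 j := Iff.rfl

@[simp] lemma mem_levelSet_inr {x : Levels a b} {i : Fin 3} {k : Fin a} :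
    Sum.inr (i, k) ∈ levelSet x ↔ 3 ≤ (i : ℕ) + x.2 k := Iff.rfl

lemma tabC2_eq_tabOfLevels_comp_levels : tabC2 a b = tabOfLevels ∘ levels := rfl

lemma levels_fst_apply (I : Set (VC2 a b)) (j : Fin b) :
    (levels I).1 j = {i : Fin 4 | Sum.inl (i, j) ∈ I}.ncard := by
  rw [← ncard_inter_range_of_injective (f := fun i : Fin 4 => (Sum.inl (i, j) : VC2 a b))
    (fun _ _ h => by simpa using h)]
  dsimp only [levels]
  congr 2
  ext
  simp [Fin.exists_fin_succ, eq_comm]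

lemma levels_snd_apply (I : Set (VC2 a b)) (k : Fin a) :
    (levels I).2 k = {i : Fin 3 | Sum.inr (i, k) ∈ I}.ncard := by
  rw [← ncard_inter_range_of_injective (f := fun i : Fin 3 => (Sum.inr (i, k) : VC2 a b))
    (fun _ _ h => by simpa using h)]
  dsimp only [levels]
  congr 2
  ext
  simp [Fin.exists_fin_succ, eq_comm]

lemma levels_mem_levelBox (I : Set (VC2 a b)) : levels I ∈ levelBox a b := by
  refine ⟨fun j => ?_, fun k => ?_⟩
  · simpa [levels_fst_apply] using ncard_le_card {i : Fin 4 | Sum.inl (i, j) ∈ I}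
  · simpa [levels_snd_apply] using ncard_le_card {i : Fin 3 | Sum.inr (i, k) ∈ I}

lemma levels_levelSet {x : Levels a b} (hx : x ∈ levelBox a b) : levels (levelSet x) = x := by
  refine Prod.ext (funext fun j => ?_) (funext fun k => ?_)
  · rw [levels_fst_apply]
    exact Fin.ncard_setOf_le_add (hx.1 j)
  · rw [levels_snd_apply]
    exact Fin.ncard_setOf_le_add (hx.2 k)

lemma levelSet_levels {I : Set (VC2 a b)} (hI : IsIdealOf (relC2 a b) I) :
    levelSet (levels I) = I := by
  have hclosed := isIdealOf_iff_forall_rel.mp hI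
  ext (⟨i, j⟩ | ⟨i, k⟩)
  · rw [mem_levelSet_inl, levels_fst_apply, Fin.le_add_ncard_iff]
    exact Fin.monotone_iff_le_succ.mpr fun i => hclosed _ _ (Or.inl ⟨rfl, by simp⟩)
  · rw [mem_levelSet_inr, levels_snd_apply, Fin.le_add_ncard_iff]
    exact Fin.monotone_iff_le_succ.mpr fun i => hclosed _ _ (Or.inl ⟨rfl, by simp⟩)

lemma isIdealOf_levelSet_iff {x : Levels a b} (hx : ∀ k, x.2 k ≤ 3) :
    IsIdealOf (relC2 a b) (levelSet x) ↔ IsIdealLevels x := by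
  rw [isIdealOf_iff_forall_rel]
  constructor
  · intro h
    refine ⟨fun j j' hj => ?_, fun k k' hk => ?_, fun j k hj hk => ?_⟩
    · have h₃ := h (.inl (3, j)) (.inl (3, j')) (Or.inr ⟨hj, by simp⟩)
      have h₁ := h (.inl (1, j)) (.inl (2, j')) (Or.inr ⟨hj, by simp⟩)
      have h₀ := h (.inl (0, j)) (.inl (0, j')) (Or.inr ⟨hj, by simp⟩)
      simp only [mem_levelSet_inl] at h₀ h₁ h₃
      omega
    · have h₂ := h (.inr (2, k)) (.inr (2, k')) (Or.inr ⟨hk, rfl⟩)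
      have h₁ := h (.inr (1, k)) (.inr (1, k')) (Or.inr ⟨hk, rfl⟩)
      have h₀ := h (.inr (0, k)) (.inr (0, k')) (Or.inr ⟨hk, rfl⟩)
      simp only [mem_levelSet_inr] at h₀ h₁ h₂
      have := hx k'
      omega
    · have h₃ := h (.inl (3, j)) (.inr (1, k)) ⟨hj, hk, by simp⟩
      have h₁ := h (.inl (1, j)) (.inr (0, k)) ⟨hj, hk, by simp⟩
      simp only [mem_levelSet_inl, mem_levelSet_inr] at h₁ h₃
      omega
  · rintro ⟨hw, hz, hwz⟩ (⟨i, j⟩ | ⟨i, k⟩) (⟨i', j'⟩ | ⟨i', k'⟩) hr hy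
    · simp only [mem_levelSet_inl] at hy ⊢
      rcases hr with ⟨hj, hi⟩ | ⟨hj, hi⟩
      · obtain rfl := Fin.ext hj
        omega
      · have := hw j j' hj
        omega
    · obtain ⟨hj, hk, hi⟩ := hr
      simp only [mem_levelSet_inl, mem_levelSet_inr] at hy ⊢
      have := hwz j k' hj hk
      omega
    · exact hr.elim
    · simp only [mem_levelSet_inr] at hy ⊢
      rcases hr with ⟨hk, hi⟩ | ⟨hk, hi⟩
      · obtain rfl := Fin.ext hk
        omega
      · have := hz k k' hk
        omega

lemma bijOn_levels :
    BijOn levels {I | IsIdealOf (relC2 a b) I} (levelBox a b ∩ {x | IsIdealLevels x}) := by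
  refine InvOn.bijOn (f' := levelSet)
    ⟨fun I hI => levelSet_levels hI, fun x hx => levels_levelSet hx.1⟩ (fun I hI => ?_)
    (fun x hx => (isIdealOf_levelSet_iff hx.1.2).mpr hx.2)
  have hbox := levels_mem_levelBox I
  refine ⟨hbox, (isIdealOf_levelSet_iff hbox.2).mp ?_⟩
  rwa [levelSet_levels hI]

lemma tabOfLevels_mem_SC2_iff {x : Levels a b} (hx : x ∈ levelBox a b) :
    tabOfLevels x ∈ SC2 a b ↔ IsIdealLevels x := by
  simp only [mem_SC2_iff, tabOfLevels, Function.comp_apply]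
  constructor
  · rintro ⟨-, -, hw, hz, hwz⟩
    exact ⟨fun j j' hj => (c2ColumnLE_c2Column_iff (hx.1 j) (hx.1 j')).mp (hw j j' hj),
      fun k k' hk => (c2Entry_le_c2Entry_iff (hx.2 k) (hx.2 k')).mp (hz k k' hk),
      fun j k hj hk => (c2Column_fst_le_c2Entry_iff (hx.1 j) (hx.2 k)).mp (hwz j k hj hk)⟩
  · rintro ⟨hw, hz, hwz⟩
    exact ⟨fun j => bijOn_c2Column.mapsTo (hx.1 j), fun k => bijOn_c2Entry.mapsTo (hx.2 k),
      fun j j' hj => (c2ColumnLE_c2Column_iff (hx.1 j) (hx.1 j')).mpr (hw j j' hj),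
      fun k k' hk => (c2Entry_le_c2Entry_iff (hx.2 k) (hx.2 k')).mpr (hz k k' hk),
      fun j k hj hk => (c2Column_fst_le_c2Entry_iff (hx.1 j) (hx.2 k)).mpr (hwz j k hj hk)⟩

lemma injOn_tabOfLevels : InjOn tabOfLevels (levelBox a b) := fun _ hx _ hy h =>
  Prod.ext
    (funext fun j => bijOn_c2Column.injOn (hx.1 j) (hy.1 j) (congrFun (congrArg Prod.fst h) j))
    (funext fun k => bijOn_c2Entry.injOn (hx.2 k) (hy.2 k) (congrFun (congrArg Prod.snd h) k))

lemma SC2_subset_image_tabOfLevels : SC2 a b ⊆ tabOfLevels '' levelBox a b := fun T hT => by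
  obtain ⟨hcol, hent, -⟩ := mem_SC2_iff.mp hT
  choose c hc hcT using fun j => bijOn_c2Column.surjOn (hcol j)
  choose d hd hdT using fun k => bijOn_c2Entry.surjOn (hent k)
  exact ⟨(c, d), ⟨hc, hd⟩, Prod.ext (funext hcT) (funext hdT)⟩

lemma bijOn_tabOfLevels :
    BijOn tabOfLevels (levelBox a b ∩ {x | IsIdealLevels x}) (SC2 a b) := by
  refine ⟨fun x hx => (tabOfLevels_mem_SC2_iff hx.1).mpr hx.2,
    injOn_tabOfLevels.mono inter_subset_left, fun T hT => ?_⟩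
  obtain ⟨x, hx, rfl⟩ := SC2_subset_image_tabOfLevels hT
  exact ⟨x, ⟨hx, (tabOfLevels_mem_SC2_iff hx).mp hT⟩, rfl⟩

end Levels

/-- The map `I ↦ tableau(I)` is a bijection from the set of order ideals of the
`C2`-semistandard poset `P_C2^{βα}(a,b)` onto the set `S_C2(a,b)` of
`C2`-semistandard tableaux of shape `(a,b)`. -/
theorem C2_ideals_biject_with_tableaux (a b : ℕ) :
    Set.BijOn (tabC2 a b) {I : Set (VC2 a b) | IsIdealOf (relC2 a b) I} (SC2 a b) := by
  rw [tabC2_eq_tabOfLevels_comp_levels]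
  exact bijOn_tabOfLevels.comp bijOn_levels
end

section
/- For all integers a, b ≥ 0, the following identity holds in the Laurent polynomial ring ℤ[x, x⁻¹, y, y⁻¹]: (x y − x⁻¹ y² − x³ y⁻¹ + x⁻³ y² + x³ y⁻² − x⁻³ y − x y⁻² + x⁻¹ y⁻¹) · Σ_{T ∈ S_C2(a,b)} x^{n_1(T) − n_2(T) + n_3(T) − n_4(T)} y^{n_2(T) − n_3(T)} = x^{a+1} y^{b+1} − x^{−(a+1)} y^{a+b+2} − x^{a+2b+3} y^{−(b+1)} + x^{−(a+2b+3)} y^{a+b+2} + x^{a+2b+3} y^{−(a+b+2)} − x^{−(a+2b+3)} y^{b+1} − x^{a+1} y^{−(a+b+2)} + x^{−(a+1)} y^{−(b+1)}. (By the Weyl character formula, this says that the weight generating function of S_C2(a,b) is the Weyl character of the irreducible representation of the simple Lie algebra C2 with highest weight a ω_α + b ω_β, written in the variables x = e^{ω_α}, y = e^{ω_β}.) -/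
/-- The monomial `x^p y^q` in the Laurent polynomial ring `ℤ[x,x⁻¹,y,y⁻¹]`,
realized as the group algebra of `ℤ × ℤ` over `ℤ`. -/
noncomputable def mm (p q : ℤ) : AddMonoidAlgebra ℤ (ℤ × ℤ) :=
  AddMonoidAlgebra.single (p, q) 1

/-!
Ordered componentwise, the admissible columns `(1,2) < (1,3) < (2,3) < (2,4) < (3,4)` form a chain
(this is what excluding `(1,4)` buys), so a tableau is a weakly increasing word in this chain, using
`(2,3)` at most once, followed by a weakly increasing row whose entries are at least the top entry
of every column. Removing the first column, or the first row entry when there are no columns,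
expresses the weight generating function of the tableaux whose columns and row entries are bounded
below by a given column and entry through generating functions with smaller shapes or larger
bounds. Multiplied by the Weyl denominator, these satisfy linear recursions in `a` and `b` whose
explicit solutions are checked by induction; with the weakest bounds, i.e. for all of
`S_C2(a,b)`, the solution is the Weyl numerator.
-/

namespace C2Tableau

open Set

variable {a b : ℕ}

abbrev LaurentPoly : Type := AddMonoidAlgebra ℤ (ℤ × ℤ)

lemma mm_mul (p q r s : ℤ) : mm p q * mm r s = mm (p + r) (q + s) := by
  simp [mm, AddMonoidAlgebra.single_mul_single, Prod.mk_add_mk]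

lemma mm_zero_zero : mm 0 0 = 1 := rfl

noncomputable def weight (T : TabT a b) : LaurentPoly :=
  mm ((nkOf T 1 : ℤ) - (nkOf T 2 : ℤ) + (nkOf T 3 : ℤ) - (nkOf T 4 : ℤ))
    ((nkOf T 2 : ℤ) - (nkOf T 3 : ℤ))

noncomputable def weightSum (s : Set (TabT a b)) : LaurentPoly := ∑ᶠ T ∈ s, weight T

lemma weightSum_empty : weightSum (∅ : Set (TabT a b)) = 0 := finsum_mem_empty

def xExp (k : ℕ) : ℤ :=
  (if k = 1 then 1 else 0) - (if k = 2 then 1 else 0) + (if k = 3 then 1 else 0) -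
    (if k = 4 then 1 else 0)

def yExp (k : ℕ) : ℤ := (if k = 2 then 1 else 0) - (if k = 3 then 1 else 0)

noncomputable def entryMono (k : ℕ) : LaurentPoly := mm (xExp k) (yExp k)

lemma entryMono_one : entryMono 1 = mm 1 0 := rfl
lemma entryMono_two : entryMono 2 = mm (-1) 1 := rfl
lemma entryMono_three : entryMono 3 = mm 1 (-1) := rfl
lemma entryMono_four : entryMono 4 = mm (-1) 0 := rfl

def consCol (c : ℕ × ℕ) (T : TabT a b) : TabT a (b + 1) := (Fin.cons c T.1, T.2)

def consRow (r : ℕ) (T : TabT a b) : TabT (a + 1) b := (T.1, Fin.cons r T.2)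

lemma nkOf_consCol (c : ℕ × ℕ) (T : TabT a b) (k : ℕ) :
    nkOf (consCol c T) k =
      (if c.1 = k then 1 else 0) + (if c.2 = k then 1 else 0) + nkOf T k := by
  rw [consCol, nkOf, nkOf, Fin.card_filter_univ_succ', Fin.card_filter_univ_succ']
  simp only [Fin.cons_zero, Fin.cons_succ]
  ring

lemma nkOf_consRow (r : ℕ) (T : TabT a b) (k : ℕ) :
    nkOf (consRow r T) k = (if r = k then 1 else 0) + nkOf T k := by
  rw [consRow, nkOf, nkOf, Fin.card_filter_univ_succ']
  simp only [Fin.cons_zero, Fin.cons_succ]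
  ring

lemma weight_consCol (c : ℕ × ℕ) (T : TabT a b) :
    weight (consCol c T) = entryMono c.1 * entryMono c.2 * weight T := by
  simp only [weight, entryMono, nkOf_consCol, mm_mul, xExp, yExp]
  congr 1 <;> push_cast <;> ring

lemma weight_consRow (r : ℕ) (T : TabT a b) :
    weight (consRow r T) = entryMono r * weight T := by
  simp only [weight, entryMono, nkOf_consRow, mm_mul, xExp, yExp]
  congr 1 <;> push_cast <;> ring

lemma consCol_injective (c : ℕ × ℕ) : Function.Injective (consCol (a := a) (b := b) c) := by
  intro S T h
  simp only [consCol, Prod.mk.injEq, Fin.cons_inj] at h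
  exact Prod.ext h.1.2 h.2

lemma consRow_injective (r : ℕ) : Function.Injective (consRow (a := a) (b := b) r) := by
  intro S T h
  simp only [consRow, Prod.mk.injEq, Fin.cons_inj] at h
  exact Prod.ext h.1 h.2.2

lemma range_consCol (c : ℕ × ℕ) : range (consCol (a := a) (b := b) c) = {T | T.1 0 = c} := by
  ext T
  refine ⟨?_, fun h => ⟨(Fin.tail T.1, T.2), ?_⟩⟩
  · rintro ⟨S, rfl⟩
    rfl
  · rw [consCol, ← h, Fin.cons_self_tail]

lemma range_consRow (r : ℕ) : range (consRow (a := a) (b := b) r) = {T | T.2 0 = r} := by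
  ext T
  refine ⟨?_, fun h => ⟨(T.1, Fin.tail T.2), ?_⟩⟩
  · rintro ⟨S, rfl⟩
    rfl
  · rw [consRow, ← h, Fin.cons_self_tail]

lemma weightSum_image_consCol (c : ℕ × ℕ) (s : Set (TabT a b)) :
    weightSum (consCol c '' s) = entryMono c.1 * entryMono c.2 * weightSum s := by
  rw [weightSum, weightSum, finsum_mem_image (consCol_injective c).injOn, mul_finsum_mem]
  simp only [weight_consCol]

lemma weightSum_image_consRow (r : ℕ) (s : Set (TabT a b)) :
    weightSum (consRow r '' s) = entryMono r * weightSum s := by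
  rw [weightSum, weightSum, finsum_mem_image (consRow_injective r).injOn, mul_finsum_mem]
  simp only [weight_consRow]

lemma weightSum_eq_consCol {X : Set (TabT a (b + 1))} (hX : X.Finite) (c : ℕ × ℕ) :
    weightSum X = entryMono c.1 * entryMono c.2 * weightSum (consCol c ⁻¹' X) +
      weightSum {T ∈ X | T.1 0 ≠ c} := by
  rw [← weightSum_image_consCol, image_preimage_eq_inter_range, range_consCol, weightSum,
    weightSum, weightSum]
  exact (finsum_mem_inter_add_sdiff _ hX).symm

lemma weightSum_eq_consRow {X : Set (TabT (a + 1) b)} (hX : X.Finite) (r : ℕ) :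
    weightSum X = entryMono r * weightSum (consRow r ⁻¹' X) + weightSum {T ∈ X | T.2 0 ≠ r} := by
  rw [← weightSum_image_consRow, image_preimage_eq_inter_range, range_consRow, weightSum,
    weightSum, weightSum]
  exact (finsum_mem_inter_add_sdiff _ hX).symm

def IsC2Col (e : ℕ × ℕ) : Prop := 1 ≤ e.1 ∧ e.1 < e.2 ∧ e.2 ≤ 4 ∧ e ≠ (1, 4)

lemma consCol_mem_SC2 {c : ℕ × ℕ} {T : TabT a b} :
    consCol c T ∈ SC2 a (b + 1) ↔
      IsC2Col c ∧ T ∈ SC2 a b ∧ (∀ j, c ≤ T.1 j) ∧ (∀ i, c.1 ≤ T.2 i) ∧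
        (c = (2, 3) → ∀ j, T.1 j ≠ (2, 3)) := by
  obtain ⟨T₁, T₂⟩ := T
  obtain ⟨c₁, c₂⟩ := c
  simp only [SC2, Fin.forall_fin_succ, nonpos_iff_eq_zero, Std.le_refl, and_self, imp_self,
    zero_le, forall_const, true_and, Fin.succ_ne_zero, IsEmpty.forall_iff, Fin.succ_le_succ_iff,
    ne_eq, implies_true, (Fin.succ_ne_zero _).symm, imp_false, Fin.succ_inj, consCol,
    mem_ofPred_eq, Fin.cons_zero, Fin.cons_succ, Prod.mk.injEq, not_and, and_imp, IsC2Col,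
    Prod.le_def]
  constructor
  · rintro ⟨⟨⟨h1, -, -, h2, h12⟩, hT1⟩, hT2, ⟨hc, hmono⟩, hrow, ⟨hcrow, hTrow⟩,
      ⟨h14, hT14⟩, h23, hT23⟩
    exact ⟨⟨h1, h12, h2, h14⟩, ⟨hT1, hT2, hmono, hrow, hTrow, hT14, fun j => (hT23 j).2⟩, hc,
      hcrow, fun e2 e3 j => h23 j e2 e3⟩
  · rintro ⟨⟨h1, h12, h2, h14⟩, ⟨hT1, hT2, hmono, hrow, hTrow, hT14, hT23⟩, hc, hcrow, h23⟩
    exact ⟨⟨⟨h1, by omega, by omega, h2, h12⟩, hT1⟩, hT2, ⟨hc, hmono⟩, hrow, ⟨hcrow, hTrow⟩,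
      ⟨h14, hT14⟩, fun j e2 e3 => h23 e2 e3 j,
      fun i => ⟨fun hi e2 e3 => h23 e2 e3 i hi, hT23 i⟩⟩

lemma consRow_mem_SC2 {r : ℕ} {T : TabT a b} :
    consRow r T ∈ SC2 (a + 1) b ↔
      (1 ≤ r ∧ r ≤ 4) ∧ T ∈ SC2 a b ∧ (∀ i, r ≤ T.2 i) ∧ ∀ j, (T.1 j).1 ≤ r := by
  obtain ⟨T₁, T₂⟩ := T
  simp only [SC2, consRow, mem_ofPred_eq, Fin.forall_fin_succ, Fin.cons_zero, Fin.cons_succ,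
    Fin.succ_le_succ_iff, Fin.zero_le, forall_and]
  tauto

lemma isC2Col_of_mem_SC2 {T : TabT a b} (hT : T ∈ SC2 a b) (j : Fin b) : IsC2Col (T.1 j) :=
  ⟨(hT.1 j).1, (hT.1 j).2.2.2.2, (hT.1 j).2.2.2.1, hT.2.2.2.2.2.1 j⟩

lemma col_le_col_of_mem_SC2 {T : TabT a b} (hT : T ∈ SC2 a b) {j j' : Fin b} (h : j ≤ j') :
    T.1 j ≤ T.1 j' :=
  Prod.le_def.2 (hT.2.2.1 j j' h)

lemma row_le_row_of_mem_SC2 {T : TabT a b} (hT : T ∈ SC2 a b) {i i' : Fin a} (h : i ≤ i') :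
    T.2 i ≤ T.2 i' :=
  hT.2.2.2.1 i i' h

lemma col_fst_le_row_of_mem_SC2 {T : TabT a b} (hT : T ∈ SC2 a b) (j : Fin b) (i : Fin a) :
    (T.1 j).1 ≤ T.2 i :=
  hT.2.2.2.2.1 j i

lemma SC2_finite : (SC2 a b).Finite := by
  refine ((Set.Finite.pi fun _ => (finite_Iic 4).prod (finite_Iic 4)).prod
    (Set.Finite.pi fun _ => finite_Iic 4)).subset ?_
  rintro T ⟨hcol, hrow, -⟩
  exact ⟨fun j _ => ⟨(hcol j).2.1, (hcol j).2.2.2.1⟩, fun i _ => (hrow i).2⟩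

def SC2ge (a b : ℕ) (c : ℕ × ℕ) (v : ℕ) : Set (TabT a b) :=
  {T ∈ SC2 a b | (∀ j, c ≤ T.1 j) ∧ ∀ i, v ≤ T.2 i}

lemma SC2ge_finite (c : ℕ × ℕ) (v : ℕ) : (SC2ge a b c v).Finite :=
  SC2_finite.subset (sep_subset _ _)

lemma SC2_eq_SC2ge : SC2 a b = SC2ge a b (1, 2) 1 := by
  ext T
  refine ⟨fun hT => ⟨hT, fun j => ?_, fun i => (hT.2.1 i).1⟩, fun hT => hT.1⟩
  obtain ⟨h1, h12, -⟩ := isC2Col_of_mem_SC2 hT j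
  exact Prod.mk_le_mk.2 ⟨h1, h1.trans_lt h12⟩

def IsNextCol (c d : ℕ × ℕ) : Prop := c < d ∧ ∀ e, IsC2Col e → c ≤ e → e ≠ c → d ≤ e

lemma isNextCol_12_13 : IsNextCol (1, 2) (1, 3) := by
  refine ⟨?_, ?_⟩ <;>
    simp only [IsC2Col, Prod.lt_iff, Prod.le_def, ne_eq, Prod.ext_iff, Prod.forall] <;> omega

lemma isNextCol_13_23 : IsNextCol (1, 3) (2, 3) := by
  refine ⟨?_, ?_⟩ <;>
    simp only [IsC2Col, Prod.lt_iff, Prod.le_def, ne_eq, Prod.ext_iff, Prod.forall] <;> omega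

lemma isNextCol_23_24 : IsNextCol (2, 3) (2, 4) := by
  refine ⟨?_, ?_⟩ <;>
    simp only [IsC2Col, Prod.lt_iff, Prod.le_def, ne_eq, Prod.ext_iff, Prod.forall] <;> omega

lemma isNextCol_24_34 : IsNextCol (2, 4) (3, 4) := by
  refine ⟨?_, ?_⟩ <;>
    simp only [IsC2Col, Prod.lt_iff, Prod.le_def, ne_eq, Prod.ext_iff, Prod.forall] <;> omega

lemma preimage_consCol_SC2ge {c : ℕ × ℕ} {v : ℕ} (hc : IsC2Col c) (h23 : c ≠ (2, 3))
    (hv : c.1 ≤ v) : consCol c ⁻¹' SC2ge a (b + 1) c v = SC2ge a b c v := by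
  ext S
  simp only [SC2ge, mem_preimage, mem_sep_iff, consCol_mem_SC2]
  simp only [consCol, Fin.forall_fin_succ, Fin.cons_zero, Fin.cons_succ]
  constructor
  · rintro ⟨⟨-, hS, hcol, -, -⟩, -, hrow⟩
    exact ⟨hS, hcol, hrow⟩
  · rintro ⟨hS, hcol, hrow⟩
    exact ⟨⟨hc, hS, hcol, fun i => hv.trans (hrow i), fun h => absurd h h23⟩, ⟨le_rfl, hcol⟩,
      hrow⟩

lemma preimage_consCol_SC2ge_23 :
    consCol (2, 3) ⁻¹' SC2ge a (b + 1) (2, 3) 2 = SC2ge a b (2, 4) 2 := by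
  ext S
  simp only [SC2ge, mem_preimage, mem_sep_iff, consCol_mem_SC2]
  simp only [consCol, Fin.forall_fin_succ, Fin.cons_zero, Fin.cons_succ]
  have h := isNextCol_23_24
  constructor
  · rintro ⟨⟨-, hS, hcol, -, hne⟩, -, hrow⟩
    exact ⟨hS, fun j => h.2 _ (isC2Col_of_mem_SC2 hS j) (hcol j) (hne trivial j), hrow⟩
  · rintro ⟨hS, hcol, hrow⟩
    refine ⟨⟨by norm_num [IsC2Col], hS, fun j => h.1.le.trans (hcol j), hrow, fun _ j hj => ?_⟩,
      ⟨le_rfl, fun j => h.1.le.trans (hcol j)⟩, hrow⟩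
    exact h.1.not_ge (hj ▸ hcol j)

lemma sep_head_ne_SC2ge {c d : ℕ × ℕ} {v : ℕ} (hcd : IsNextCol c d) (hv : v ≤ d.1) :
    {T ∈ SC2ge a (b + 1) c v | T.1 0 ≠ c} = SC2ge a (b + 1) d d.1 := by
  ext T
  constructor
  · rintro ⟨⟨hT, hcol, -⟩, h0⟩
    have hd : d ≤ T.1 0 := hcd.2 _ (isC2Col_of_mem_SC2 hT 0) (hcol 0) h0
    exact ⟨hT, fun j => hd.trans (col_le_col_of_mem_SC2 hT (Fin.zero_le j)),
      fun i => hd.1.trans (col_fst_le_row_of_mem_SC2 hT 0 i)⟩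
  · rintro ⟨hT, hcol, hrow⟩
    exact ⟨⟨hT, fun j => hcd.1.le.trans (hcol j), fun i => hv.trans (hrow i)⟩,
      fun h0 => hcd.1.not_ge (h0 ▸ hcol 0)⟩

lemma sep_head_ne_SC2ge_34 {v : ℕ} : {T ∈ SC2ge a (b + 1) (3, 4) v | T.1 0 ≠ (3, 4)} = ∅ := by
  refine eq_empty_of_forall_notMem fun T ⟨⟨hT, hcol, _⟩, h0⟩ => h0 ?_
  obtain ⟨-, h12, h2, -⟩ := isC2Col_of_mem_SC2 hT 0
  obtain ⟨h1', h2'⟩ := Prod.le_def.1 (hcol 0)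
  exact Prod.ext (by dsimp only at *; omega) (by dsimp only at *; omega)

lemma preimage_consRow_SC2ge {c : ℕ × ℕ} {r : ℕ} (h1 : 1 ≤ r) (h4 : r ≤ 4) :
    consRow r ⁻¹' SC2ge (a + 1) 0 c r = SC2ge a 0 c r := by
  ext S
  simp only [SC2ge, mem_preimage, mem_sep_iff, consRow_mem_SC2]
  simp only [consRow, Fin.forall_fin_succ, Fin.cons_zero, Fin.cons_succ, IsEmpty.forall_iff]
  constructor
  · rintro ⟨⟨-, hS, -⟩, -, -, hrow⟩
    exact ⟨hS, trivial, hrow⟩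
  · rintro ⟨hS, -, hrow⟩
    exact ⟨⟨⟨h1, h4⟩, hS, hrow, trivial⟩, trivial, le_rfl, hrow⟩

lemma sep_row_ne_SC2ge {c : ℕ × ℕ} {v : ℕ} :
    {T ∈ SC2ge (a + 1) b c v | T.2 0 ≠ v} = SC2ge (a + 1) b c (v + 1) := by
  ext T
  constructor
  · rintro ⟨⟨hT, hcol, hrow⟩, h0⟩
    exact ⟨hT, hcol, fun i =>
      (lt_of_le_of_ne (hrow 0) (Ne.symm h0)).trans_le (row_le_row_of_mem_SC2 hT (Fin.zero_le i))⟩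
  · rintro ⟨hT, hcol, hrow⟩
    exact ⟨⟨hT, hcol, fun i => (Nat.le_succ v).trans (hrow i)⟩,
      fun h0 => by have := hrow 0; omega⟩

lemma SC2ge_five {c : ℕ × ℕ} : SC2ge (a + 1) b c 5 = ∅ :=
  eq_empty_of_forall_notMem fun T ⟨hT, _, hrow⟩ => by have := hT.2.1 0; have := hrow 0; omega

lemma weightSum_SC2ge_zero_zero (c : ℕ × ℕ) (v : ℕ) : weightSum (SC2ge 0 0 c v) = 1 := by
  have : SC2ge 0 0 c v = {(Fin.elim0, Fin.elim0)} :=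
    eq_singleton_iff_unique_mem.2
      ⟨by simp [SC2ge, SC2],
        fun T _ => Prod.ext (funext fun j => j.elim0) (funext fun i => i.elim0)⟩
  rw [weightSum, this, finsum_mem_singleton]
  simp [weight, nkOf, mm_zero_zero]

lemma weightSum_SC2ge_succ_col {c₁ c₂ d₁ d₂ v : ℕ} (hc : IsC2Col (c₁, c₂))
    (h23 : (c₁, c₂) ≠ (2, 3)) (hcv : c₁ ≤ v) (hcd : IsNextCol (c₁, c₂) (d₁, d₂)) (hvd : v ≤ d₁) :
    weightSum (SC2ge a (b + 1) (c₁, c₂) v) =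
      entryMono c₁ * entryMono c₂ * weightSum (SC2ge a b (c₁, c₂) v) +
        weightSum (SC2ge a (b + 1) (d₁, d₂) d₁) := by
  rw [weightSum_eq_consCol (SC2ge_finite _ _) (c₁, c₂), preimage_consCol_SC2ge hc h23 hcv,
    sep_head_ne_SC2ge hcd hvd]

lemma weightSum_SC2ge_succ_col_23 :
    weightSum (SC2ge a (b + 1) (2, 3) 2) =
      entryMono 2 * entryMono 3 * weightSum (SC2ge a b (2, 4) 2) +
        weightSum (SC2ge a (b + 1) (2, 4) 2) := by
  rw [weightSum_eq_consCol (SC2ge_finite _ _) (2, 3), preimage_consCol_SC2ge_23,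
    sep_head_ne_SC2ge isNextCol_23_24 le_rfl]

lemma weightSum_SC2ge_succ_col_34 :
    weightSum (SC2ge a (b + 1) (3, 4) 3) =
      entryMono 3 * entryMono 4 * weightSum (SC2ge a b (3, 4) 3) := by
  rw [weightSum_eq_consCol (SC2ge_finite _ _) (3, 4),
    preimage_consCol_SC2ge (by norm_num [IsC2Col]) (by norm_num) le_rfl, sep_head_ne_SC2ge_34,
    weightSum_empty, add_zero]

lemma weightSum_SC2ge_succ_row {c : ℕ × ℕ} {v : ℕ} (h1 : 1 ≤ v) (h4 : v ≤ 4) :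
    weightSum (SC2ge (a + 1) 0 c v) =
      entryMono v * weightSum (SC2ge a 0 c v) + weightSum (SC2ge (a + 1) 0 c (v + 1)) := by
  rw [weightSum_eq_consRow (SC2ge_finite _ _) v, preimage_consRow_SC2ge h1 h4, sep_row_ne_SC2ge]

noncomputable def weylDenom : LaurentPoly :=
  mm 1 1 - mm (-1) 2 - mm 3 (-1) + mm (-3) 2 + mm 3 (-2) - mm (-3) 1 - mm 1 (-2) + mm (-1) (-1)

noncomputable def weylNumer (α β : ℤ) : LaurentPoly :=
  mm (α + 1) (β + 1) - mm (-(α + 1)) (α + β + 2) - mm (α + 2 * β + 3) (-(β + 1)) +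
    mm (-(α + 2 * β + 3)) (α + β + 2) + mm (α + 2 * β + 3) (-(α + β + 2)) -
    mm (-(α + 2 * β + 3)) (β + 1) - mm (α + 1) (-(α + β + 2)) + mm (-(α + 1)) (-(β + 1))

/- `weylDenom = (xy - x⁻¹y)(1 - y⁻¹)(1 - x²y⁻²)(1 - x⁻²y)` and `1 - x⁻²y = x⁻¹y (u - w)`, where
`u = xy⁻¹` and `w = x⁻¹` are the weights of the entries 3 and 4; so `rowForm3 α` is `weylDenom`
times the geometric sum `∑ₖ uᵏ w^(α-k)` over the one-row tableaux with entries in `{3, 4}`. -/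
noncomputable def rowForm3 (α : ℤ) : LaurentPoly :=
  (mm 1 1 - mm (-1) 1) * (mm 0 0 - mm 0 (-1)) * (mm 0 0 - mm 2 (-2)) *
    (mm α (-α) - mm (-α - 2) 1)

noncomputable def rowForm2 (α : ℤ) : LaurentPoly :=
  (mm 1 1 - mm (-1) 1) * ((mm 0 0 - mm 0 (-1)) * (mm (-α) α - mm (α + 2) (-α - 2)) -
    (mm 0 0 - mm 2 (-2)) * (mm (-α - 2) (α + 1) - mm (-α - 2) 0))

noncomputable def colForm24 (α μ : ℤ) : LaurentPoly :=
  mm (-2 * μ) μ * (rowForm2 α + (mm 1 1 - mm (-1) 1) * (mm 0 0 - mm 0 (-1)) *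
    (mm 2 (-2) - mm (2 * μ + 2) (-2 * μ - 2)) * (mm α (-α) - mm (-α - 2) 1))

lemma weightSum_row4 (a : ℕ) (c : ℕ × ℕ) : weightSum (SC2ge a 0 c 4) = mm (-a) 0 := by
  induction a with
  | zero => rw [weightSum_SC2ge_zero_zero, Nat.cast_zero, neg_zero, mm_zero_zero]
  | succ n ih =>
    rw [weightSum_SC2ge_succ_row (by norm_num) le_rfl, ih, SC2ge_five, weightSum_empty, add_zero,
      entryMono_four, mm_mul]
    push_cast
    ring_nf

lemma weylDenom_mul_weightSum_row3 (a : ℕ) (c : ℕ × ℕ) :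
    weylDenom * weightSum (SC2ge a 0 c 3) = rowForm3 a := by
  induction a with
  | zero =>
    rw [weightSum_SC2ge_zero_zero, mul_one]
    unfold weylDenom rowForm3
    simp only [mul_sub, sub_mul, mm_mul]
    ring_nf
  | succ n ih =>
    rw [weightSum_SC2ge_succ_row (by norm_num) (by norm_num), mul_add, mul_left_comm, ih,
      weightSum_row4, entryMono_three]
    unfold weylDenom rowForm3
    push_cast
    simp only [mul_sub, sub_mul, add_mul, mm_mul]
    ring_nf

lemma weylDenom_mul_weightSum_row2 (a : ℕ) (c : ℕ × ℕ) :
    weylDenom * weightSum (SC2ge a 0 c 2) = rowForm2 a := by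
  induction a with
  | zero =>
    rw [weightSum_SC2ge_zero_zero, mul_one]
    unfold weylDenom rowForm2
    simp only [mul_sub, sub_mul, mm_mul]
    ring_nf
  | succ n ih =>
    rw [weightSum_SC2ge_succ_row (by norm_num) (by norm_num), mul_add, mul_left_comm, ih,
      weylDenom_mul_weightSum_row3, entryMono_two]
    unfold rowForm2 rowForm3
    push_cast
    simp only [mul_sub, sub_mul, mm_mul]
    ring_nf

lemma weylDenom_mul_weightSum_row1 (a : ℕ) (c : ℕ × ℕ) :
    weylDenom * weightSum (SC2ge a 0 c 1) = weylNumer a 0 := by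
  induction a with
  | zero =>
    rw [weightSum_SC2ge_zero_zero, mul_one]
    unfold weylDenom weylNumer
    ring_nf
  | succ n ih =>
    rw [weightSum_SC2ge_succ_row le_rfl (by norm_num), mul_add, mul_left_comm, ih,
      weylDenom_mul_weightSum_row2, entryMono_one]
    unfold rowForm2 weylNumer
    push_cast
    simp only [mul_sub, sub_mul, mul_add, mm_mul]
    ring_nf

lemma weylDenom_mul_weightSum_col34 (a m : ℕ) :
    weylDenom * weightSum (SC2ge a m (3, 4) 3) = mm 0 (-m) * rowForm3 a := by
  induction m with
  | zero => rw [weylDenom_mul_weightSum_row3, Nat.cast_zero, neg_zero, mm_zero_zero, one_mul]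
  | succ n ih =>
    rw [weightSum_SC2ge_succ_col_34, mul_left_comm, ih, entryMono_three, entryMono_four,
      ← mul_assoc, mm_mul, mm_mul]
    push_cast
    ring_nf

lemma weylDenom_mul_weightSum_col24 (a m : ℕ) :
    weylDenom * weightSum (SC2ge a m (2, 4) 2) = colForm24 a m := by
  induction m with
  | zero =>
    rw [weylDenom_mul_weightSum_row2]
    unfold colForm24 rowForm2
    push_cast
    simp only [mul_sub, sub_mul, mul_add, mm_mul]
    ring_nf
  | succ n ih =>
    rw [weightSum_SC2ge_succ_col (by norm_num [IsC2Col]) (by norm_num) le_rfl isNextCol_24_34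
      (by norm_num), mul_add, mul_left_comm, ih, weylDenom_mul_weightSum_col34, entryMono_two,
      entryMono_four]
    unfold colForm24 rowForm2 rowForm3
    push_cast
    simp only [mul_sub, sub_mul, mul_add, mm_mul]
    ring_nf

lemma weylDenom_mul_weightSum_col13 (a b : ℕ) :
    weylDenom * weightSum (SC2ge a b (1, 3) 1) =
      weylNumer a b - mm 0 1 * weylNumer a ((b : ℤ) - 1) := by
  induction b with
  | zero =>
    rw [weylDenom_mul_weightSum_row1]
    unfold weylNumer
    push_cast
    simp only [mul_sub, mul_add, mm_mul]
    ring_nf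
  | succ n ih =>
    rw [weightSum_SC2ge_succ_col (by norm_num [IsC2Col]) (by norm_num) le_rfl isNextCol_13_23
      (by norm_num), weightSum_SC2ge_succ_col_23, mul_add, mul_add, mul_left_comm, ih,
      mul_left_comm, weylDenom_mul_weightSum_col24, weylDenom_mul_weightSum_col24, entryMono_one,
      entryMono_two, entryMono_three]
    unfold weylNumer colForm24 rowForm2
    push_cast
    simp only [mul_sub, sub_mul, mul_add, mm_mul]
    ring_nf

lemma weylDenom_mul_weightSum_col12 (a b : ℕ) :
    weylDenom * weightSum (SC2ge a b (1, 2) 1) = weylNumer a b := by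
  induction b with
  | zero => exact weylDenom_mul_weightSum_row1 a _
  | succ n ih =>
    rw [weightSum_SC2ge_succ_col (by norm_num [IsC2Col]) (by norm_num) le_rfl isNextCol_12_13
      le_rfl, mul_add, mul_left_comm, ih, weylDenom_mul_weightSum_col13, entryMono_one,
      entryMono_two]
    unfold weylNumer
    push_cast
    simp only [mul_sub, mul_add, mm_mul]
    ring_nf

end C2Tableau

/-- Weyl's character formula for `C2`: the Weyl denominator times the weight
generating function of `S_C2(a,b)` equals the alternating Weyl numerator for
highest weight `a ω_α + b ω_β`. -/
theorem C2_character (a b : ℕ) :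
    (mm 1 1 - mm (-1) 2 - mm 3 (-1) + mm (-3) 2 + mm 3 (-2) - mm (-3) 1 -
          mm 1 (-2) + mm (-1) (-1)) *
        (∑ᶠ T ∈ SC2 a b,
          mm ((nkOf T 1 : ℤ) - (nkOf T 2 : ℤ) + (nkOf T 3 : ℤ) - (nkOf T 4 : ℤ))
            ((nkOf T 2 : ℤ) - (nkOf T 3 : ℤ))) =
      mm ((a : ℤ) + 1) ((b : ℤ) + 1) - mm (-((a : ℤ) + 1)) ((a : ℤ) + (b : ℤ) + 2) -
        mm ((a : ℤ) + 2 * (b : ℤ) + 3) (-((b : ℤ) + 1)) +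
        mm (-((a : ℤ) + 2 * (b : ℤ) + 3)) ((a : ℤ) + (b : ℤ) + 2) +
        mm ((a : ℤ) + 2 * (b : ℤ) + 3) (-((a : ℤ) + (b : ℤ) + 2)) -
        mm (-((a : ℤ) + 2 * (b : ℤ) + 3)) ((b : ℤ) + 1) -
        mm ((a : ℤ) + 1) (-((a : ℤ) + (b : ℤ) + 2)) +
        mm (-((a : ℤ) + 1)) (-((b : ℤ) + 1)) := by
  rw [C2Tableau.SC2_eq_SC2ge]
  exact C2Tableau.weylDenom_mul_weightSum_col12 a b
end

section
/- For all integers a, b ≥ 0, the following identity holds in the polynomial ring ℤ[q]: (Σ_{T ∈ S_A2(a,b)} q^{r(T)}) · (1 − q)(1 − q)(1 − q²) = (1 − q^{a+1})(1 − q^{b+1})(1 − q^{a+b+2}), where r(T) = Σ_{j=1}^{b} ((2 − T^(j)_1) + (3 − T^(j)_2)) + Σ_{j=b+1}^{a+b} (3 − T^(j)_1). -/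
/-- The rank statistic on `A2`-semistandard tableaux. -/
def rA2 {a b : ℕ} (T : TabT a b) : ℕ :=
  (∑ j : Fin b, ((2 - (T.1 j).1) + (3 - (T.1 j).2))) + ∑ i : Fin a, (3 - T.2 i)

/-- The rank statistic on `C2`-semistandard tableaux. -/
def rC2 {a b : ℕ} (T : TabT a b) : ℕ :=
  (∑ j : Fin b, ((3 - (T.1 j).1) + (4 - (T.1 j).2))) + ∑ i : Fin a, (4 - T.2 i)

/-- The rank contribution `c` of a length-two column of a `G2`-semistandard tableau. -/
def cG2col : ℕ × ℕ → ℕ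
  | (1, 2) => 10
  | (1, 3) => 9
  | (1, 4) => 8
  | (1, 5) => 7
  | (1, 6) => 6
  | (1, 7) => 5
  | (2, 5) => 6
  | (2, 6) => 5
  | (2, 7) => 4
  | (3, 6) => 4
  | (3, 7) => 3
  | (4, 7) => 2
  | (5, 7) => 1
  | (6, 7) => 0
  | _ => 0

/-- The rank statistic on `G2`-semistandard tableaux. -/
def rG2 {a b : ℕ} (T : TabT a b) : ℕ :=
  (∑ j : Fin b, cG2col (T.1 j)) + ∑ i : Fin a, (7 - T.2 i)

/-! Both rows of an `A2`-semistandard tableau are weakly increasing sequences in a three-element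
chain (`(1,2) < (1,3) < (2,3)` for the columns of length two, `1 < 2 < 3` for those of length one),
so a tableau is encoded by the numbers `u ≤ v ≤ b` and `s ≤ t ≤ a` of entries lying at or below
the two lower levels; the only interaction between the rows is that `v < b` (a column `(2,3)`)
forces `s = 0`. The rank is `u + v + s + t`, so splitting on whether `v = b` the generating
function is `W(b)·[a+1] + q^b·[b+1]·W(a+1)`, where `[n] = 1 + ⋯ + q^(n-1)` and
`W(n) = ∑_{u ≤ v < n} q^(u+v) = (1-q^n)(1-q^(n+1)) / ((1-q)(1-q²))`. -/

open Finset Polynomial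

theorem Monotone.le_iff_lt_card_filter_le {α : Type*} [Preorder α] [DecidableLE α] {n : ℕ}
    {f : Fin n → α} (hf : Monotone f) (c : α) (j : Fin n) : f j ≤ c ↔ (j : ℕ) < #{i | f i ≤ c} := by
  constructor
  · intro hj
    have hsub : Iic j ⊆ ({i | f i ≤ c} : Finset (Fin n)) := fun i hi => by
      simpa using (hf (mem_Iic.mp hi)).trans hj
    have := card_le_card hsub
    rw [Fin.card_Iic] at this
    omega
  · intro hj
    by_contra hjc
    have hsub : ({i | f i ≤ c} : Finset (Fin n)) ⊆ Iio j := fun i hi => by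
      simp only [mem_filter, mem_univ, true_and] at hi
      exact mem_Iio.mpr (lt_of_not_ge fun hji => hjc ((hf hji).trans hi))
    have := card_le_card hsub
    rw [Fin.card_Iio] at this
    omega

theorem Fin.card_filter_of_iff_val_lt {n m : ℕ} (hm : m ≤ n) (P : Fin n → Prop)
    [DecidablePred P] (hP : ∀ i, P i ↔ (i : ℕ) < m) : #{i | P i} = m := by
  rw [filter_congr fun i _ => hP i, Fin.card_filter_val_lt, min_eq_right hm]

theorem A2column_eq {c : ℕ × ℕ} (hc : 1 ≤ c.1 ∧ c.1 ≤ 3 ∧ 1 ≤ c.2 ∧ c.2 ≤ 3 ∧ c.1 < c.2) :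
    c = if c ≤ (1, 2) then (1, 2) else if c ≤ (1, 3) then (1, 3) else (2, 3) := by
  obtain ⟨x, y⟩ := c
  simp only [Prod.mk_le_mk] at hc ⊢
  split_ifs <;> simp only [Prod.mk.injEq] <;> omega

theorem A2column_rank {c : ℕ × ℕ} (hc : 1 ≤ c.1 ∧ c.1 ≤ 3 ∧ 1 ≤ c.2 ∧ c.2 ≤ 3 ∧ c.1 < c.2) :
    (2 - c.1) + (3 - c.2) = (if c ≤ (1, 2) then 1 else 0) + (if c ≤ (1, 3) then 1 else 0) := by
  obtain ⟨x, y⟩ := c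
  simp only [Prod.mk_le_mk] at hc ⊢
  split_ifs <;> omega

theorem A2entry_eq {e : ℕ} (he : 1 ≤ e ∧ e ≤ 3) :
    e = if e ≤ 1 then 1 else if e ≤ 2 then 2 else 3 := by
  split_ifs <;> omega

theorem A2entry_rank {e : ℕ} (he : 1 ≤ e ∧ e ≤ 3) :
    3 - e = (if e ≤ 1 then 1 else 0) + (if e ≤ 2 then 1 else 0) := by
  split_ifs <;> omega

def A2counts {a b : ℕ} (T : TabT a b) : (ℕ × ℕ) × (ℕ × ℕ) :=
  ((#{j | T.1 j ≤ (1, 2)}, #{j | T.1 j ≤ (1, 3)}), (#{i | T.2 i ≤ 1}, #{i | T.2 i ≤ 2}))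

def A2ofCounts (a b : ℕ) (p : (ℕ × ℕ) × (ℕ × ℕ)) : TabT a b :=
  (fun j => if (j : ℕ) < p.1.1 then (1, 2) else if (j : ℕ) < p.1.2 then (1, 3) else (2, 3),
   fun i => if (i : ℕ) < p.2.1 then 1 else if (i : ℕ) < p.2.2 then 2 else 3)

def chainPairs (n : ℕ) : Finset (ℕ × ℕ) :=
  {x ∈ range (n + 1) ×ˢ range (n + 1) | x.1 ≤ x.2}

theorem mem_chainPairs {n : ℕ} {x : ℕ × ℕ} : x ∈ chainPairs n ↔ x.1 ≤ x.2 ∧ x.2 ≤ n := by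
  simp only [chainPairs, mem_filter, mem_product, mem_range]
  omega

def A2countSet (a b : ℕ) : Finset ((ℕ × ℕ) × (ℕ × ℕ)) :=
  {p ∈ chainPairs b ×ˢ chainPairs a | p.1.2 < b → p.2.1 = 0}

theorem mem_A2countSet {a b u v s t : ℕ} :
    ((u, v), (s, t)) ∈ A2countSet a b ↔
      (u ≤ v ∧ v ≤ b) ∧ (s ≤ t ∧ t ≤ a) ∧ (v < b → s = 0) := by
  simp only [A2countSet, mem_filter, mem_product, mem_chainPairs, and_assoc]

section SA2

variable {a b : ℕ} {T : TabT a b}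

theorem rA2_eq_of_mem (hT : T ∈ SA2 a b) :
    rA2 T = (A2counts T).1.1 + (A2counts T).1.2 + ((A2counts T).2.1 + (A2counts T).2.2) := by
  obtain ⟨hcol, hentry, -, -, -⟩ := hT
  simp only [rA2, A2counts, card_filter, A2column_rank (hcol _), A2entry_rank (hentry _),
    sum_add_distrib]

theorem A2ofCounts_A2counts (hT : T ∈ SA2 a b) : A2ofCounts a b (A2counts T) = T := by
  obtain ⟨hcol, hentry, hmono₁, hmono₂, -⟩ := hT
  replace hmono₁ : Monotone T.1 := hmono₁
  replace hmono₂ : Monotone T.2 := hmono₂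
  refine Prod.ext (funext fun j => ?_) (funext fun i => ?_)
  · simp only [A2ofCounts, A2counts, ← Monotone.le_iff_lt_card_filter_le hmono₁]
    exact (A2column_eq (hcol j)).symm
  · simp only [A2ofCounts, A2counts, ← Monotone.le_iff_lt_card_filter_le hmono₂]
    exact (A2entry_eq (hentry i)).symm

theorem A2counts_mem (hT : T ∈ SA2 a b) : A2counts T ∈ A2countSet a b := by
  obtain ⟨hcol, hentry, hmono₁, -, htop⟩ := hT
  replace hmono₁ : Monotone T.1 := hmono₁
  have hsub₁ : #{j | T.1 j ≤ (1, 2)} ≤ #{j | T.1 j ≤ (1, 3)} :=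
    card_le_card fun _ => by simpa using fun h => h.trans (by decide)
  have hsub₂ : #{i | T.2 i ≤ 1} ≤ #{i | T.2 i ≤ 2} :=
    card_le_card fun _ => by simpa using fun h => h.trans (by decide)
  have hcard₁ := card_filter_le (univ : Finset (Fin b)) fun j => T.1 j ≤ (1, 3)
  have hcard₂ := card_filter_le (univ : Finset (Fin a)) fun i => T.2 i ≤ 2
  rw [card_univ, Fintype.card_fin] at hcard₁ hcard₂
  refine mem_A2countSet.mpr ⟨⟨hsub₁, hcard₁⟩, ⟨hsub₂, hcard₂⟩, fun hlt => ?_⟩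
  set j : Fin b := ⟨_, hlt⟩
  have hj : ¬ T.1 j ≤ (1, 3) := by
    rw [hmono₁.le_iff_lt_card_filter_le]
    exact lt_irrefl _
  have htwo : 2 ≤ (T.1 j).1 := by
    have := hcol j
    rw [Prod.le_def] at hj
    omega
  refine card_eq_zero.mpr (filter_eq_empty_iff.mpr fun i _ => ?_)
  have := htop j i
  omega

end SA2

theorem A2ofCounts_mem {a b : ℕ} {p : (ℕ × ℕ) × (ℕ × ℕ)} (hp : p ∈ A2countSet a b) :
    A2ofCounts a b p ∈ SA2 a b := by
  obtain ⟨⟨u, v⟩, ⟨s, t⟩⟩ := p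
  obtain ⟨⟨huv, hvb⟩, ⟨hst, hta⟩, hs⟩ := mem_A2countSet.mp hp
  refine ⟨fun j => ?_, fun i => ?_, fun j j' hjj' => ?_, fun i i' hii' => ?_, fun j i => ?_⟩
  · simp only [A2ofCounts]
    split_ifs <;> simp
  · simp only [A2ofCounts]
    split_ifs <;> omega
  · rw [Fin.le_def] at hjj'
    simp only [A2ofCounts]
    split_ifs <;> simp <;> omega
  · rw [Fin.le_def] at hii'
    simp only [A2ofCounts]
    split_ifs <;> omega
  · have := j.isLt
    simp only [A2ofCounts]
    split_ifs <;> dsimp only <;> omega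

theorem A2counts_A2ofCounts {a b : ℕ} {p : (ℕ × ℕ) × (ℕ × ℕ)} (hp : p ∈ A2countSet a b) :
    A2counts (A2ofCounts a b p) = p := by
  obtain ⟨⟨u, v⟩, ⟨s, t⟩⟩ := p
  obtain ⟨⟨huv, hvb⟩, ⟨hst, hta⟩, -⟩ := mem_A2countSet.mp hp
  simp only [A2counts, A2ofCounts, Prod.mk.injEq]
  refine ⟨⟨Fin.card_filter_of_iff_val_lt (by omega) _ fun j => ?_,
      Fin.card_filter_of_iff_val_lt hvb _ fun j => ?_⟩,
    Fin.card_filter_of_iff_val_lt (by omega) _ fun i => ?_,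
      Fin.card_filter_of_iff_val_lt hta _ fun i => ?_⟩ <;>
  split_ifs <;> simp <;> omega

theorem A2counts_bijOn (a b : ℕ) : Set.BijOn A2counts (SA2 a b) (A2countSet a b) :=
  Set.InvOn.bijOn ⟨fun _ hT => A2ofCounts_A2counts hT, fun _ hp => A2counts_A2ofCounts hp⟩
    (fun _ hT => A2counts_mem hT) fun _ hp => A2ofCounts_mem hp

theorem sum_chainPairs {M : Type*} [AddCommMonoid M] (n : ℕ) (f : ℕ × ℕ → M) :
    ∑ x ∈ chainPairs n, f x = ∑ v ∈ range (n + 1), ∑ u ∈ range (v + 1), f (u, v) :=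
  sum_finset_product_right _ _ _ fun x => by
    rw [mem_chainPairs, mem_range, mem_range]
    omega

theorem sum_triangle_pow_mul {R : Type*} [CommRing R] (x : R) (n : ℕ) :
    (∑ v ∈ range n, ∑ u ∈ range (v + 1), x ^ (u + v)) * ((1 - x) * (1 - x ^ 2)) =
      (1 - x ^ n) * (1 - x ^ (n + 1)) := by
  induction n with
  | zero => simp
  | succ n ih =>
    have hrow : ∑ u ∈ range (n + 1), x ^ (u + n) = x ^ n * ∑ u ∈ range (n + 1), x ^ u := by
      rw [mul_sum]
      exact sum_congr rfl fun u _ => by ring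
    rw [sum_range_succ, add_mul, ih, hrow]
    linear_combination (x ^ n * (1 - x ^ 2)) * geom_sum_mul_neg x (n + 1)

theorem sum_A2countSet {R : Type*} [CommRing R] (x : R) (a b : ℕ) :
    ∑ p ∈ A2countSet a b, x ^ (p.1.1 + p.1.2 + (p.2.1 + p.2.2)) =
      (∑ v ∈ range b, ∑ u ∈ range (v + 1), x ^ (u + v)) * ∑ t ∈ range (a + 1), x ^ t +
        x ^ b * (∑ u ∈ range (b + 1), x ^ u) *
          ∑ t ∈ range (a + 1), ∑ s ∈ range (t + 1), x ^ (s + t) := by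
  rw [A2countSet, sum_filter, sum_product, sum_chainPairs, sum_range_succ]
  simp only [sum_chainPairs]
  congr 1
  · rw [sum_mul]
    refine sum_congr rfl fun v hv => ?_
    simp only [mem_range.mp hv, true_implies, sum_mul]
    refine sum_congr rfl fun u _ => ?_
    rw [mul_sum]
    refine sum_congr rfl fun t _ => ?_
    rw [sum_ite_eq', if_pos (by simp)]
    ring
  · simp only [lt_irrefl, false_implies, if_true]
    rw [mul_sum _ _ (x ^ b), sum_mul]
    refine sum_congr rfl fun u _ => ?_
    simp only [mul_sum]
    exact sum_congr rfl fun t _ => sum_congr rfl fun s _ => by ring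

/-- The rank generating function of the lattice of `A2`-semistandard tableaux of
shape `(a,b)` satisfies
`(Σ_T q^{r(T)}) (1−q)(1−q)(1−q²) = (1−q^{a+1})(1−q^{b+1})(1−q^{a+b+2})`. -/
theorem A2_rank_generating_function (a b : ℕ) :
    (∑ᶠ T ∈ SA2 a b, (Polynomial.X : Polynomial ℤ) ^ rA2 T) *
        ((1 - Polynomial.X) * (1 - Polynomial.X) * (1 - Polynomial.X ^ 2)) =
      (1 - Polynomial.X ^ (a + 1)) * (1 - Polynomial.X ^ (b + 1)) *
        (1 - Polynomial.X ^ (a + b + 2)) := by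
  have hsum : ∑ᶠ T ∈ SA2 a b, (X : ℤ[X]) ^ rA2 T =
      ∑ p ∈ A2countSet a b, X ^ (p.1.1 + p.1.2 + (p.2.1 + p.2.2)) := by
    rw [← finsum_mem_coe_finset]
    exact finsum_mem_eq_of_bijOn A2counts (A2counts_bijOn a b) fun T hT => by
      rw [rA2_eq_of_mem hT]
  rw [hsum, sum_A2countSet]
  have hWb := sum_triangle_pow_mul (X : ℤ[X]) b
  have hWa := sum_triangle_pow_mul (X : ℤ[X]) (a + 1)
  have hGa := geom_sum_mul_neg (X : ℤ[X]) (a + 1)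
  have hGb := geom_sum_mul_neg (X : ℤ[X]) (b + 1)
  set Wa := ∑ v ∈ range (a + 1), ∑ u ∈ range (v + 1), (X : ℤ[X]) ^ (u + v)
  set Ga := ∑ t ∈ range (a + 1), (X : ℤ[X]) ^ t
  linear_combination (Ga * (1 - X)) * hWb + (1 - X ^ b) * (1 - X ^ (b + 1)) * hGa +
    X ^ b * Wa * ((1 - X) * (1 - X ^ 2)) * hGb + X ^ b * (1 - X ^ (b + 1)) * hWa
end

section
/- For all integers a, b ≥ 0, the following identity holds in the polynomial ring ℤ[q]: (Σ_{T ∈ S_C2(a,b)} q^{r(T)}) · (1 − q)(1 − q)(1 − q²)(1 − q³) = (1 − q^{a+1})(1 − q^{b+1})(1 − q^{a+b+2})(1 − q^{a+2b+3}), where r(T) = Σ_{j=1}^{b} ((3 − T^(j)_1) + (4 − T^(j)_2)) + Σ_{j=b+1}^{a+b} (4 − T^(j)_1). -/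
/-!
The admissible length-two columns form the chain `(1,2) < (1,3) < (2,3) < (2,4) < (3,4)` for the
componentwise order, with rank contributions `4, 3, 2, 1, 0`. Consider the tableaux all of whose
columns lie above a given admissible column `(s, u)` (and whose length-one entries are `≥ s`).
Such a tableau either starts with the column `(s, u)`, which can be removed at the cost of a
factor `q ^ (its contribution)`, or all its columns lie above the next column of the chain.
Removing a `(2,3)` column leaves a tableau above `(2,4)`, as `(2,3)` occurs at most once. Peeling
off the first entry in the same way gives the one-row generating functions (`q`-binomial
coefficients), and the resulting linear recurrences are solved in closed form by induction on
`b`, from the top of the chain downwards.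
-/

open Polynomial Function

lemma SC2_finite (a b : ℕ) : (SC2 a b).Finite := by
  refine ((Set.finite_Iic (fun _ => ((4 : ℕ), (4 : ℕ)))).prod
    (Set.finite_Iic (fun _ => (4 : ℕ)))).subset ?_
  rintro T ⟨hcol, hrow, -⟩
  exact ⟨fun j => ⟨(hcol j).2.1, (hcol j).2.2.2.1⟩, fun i => (hrow i).2⟩

def SC2Ge (s u a b : ℕ) : Set (TabT a b) :=
  {T | T ∈ SC2 a b ∧ (∀ j, s ≤ (T.1 j).1 ∧ u ≤ (T.1 j).2) ∧ ∀ i, s ≤ T.2 i}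

lemma SC2Ge_finite (s u a b : ℕ) : (SC2Ge s u a b).Finite :=
  (SC2_finite a b).subset fun _ hT => hT.1

lemma SC2Ge_one_two (a b : ℕ) : SC2Ge 1 2 a b = SC2 a b := by
  ext T
  refine ⟨fun hT => hT.1, fun hT => ⟨hT, fun j => ?_, fun i => (hT.2.1 i).1⟩⟩
  have := hT.1 j
  omega

lemma mem_SC2Ge_succ_iff {s u a b : ℕ} {T : TabT a (b + 1)} :
    T ∈ SC2Ge s u a (b + 1) ↔ T ∈ SC2 a (b + 1) ∧ s ≤ (T.1 0).1 ∧ u ≤ (T.1 0).2 := by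
  refine ⟨fun hT => ⟨hT.1, hT.2.1 0⟩, fun ⟨hT, hs, hu⟩ => ⟨hT, fun j => ?_, fun i => ?_⟩⟩
  · have := hT.2.2.1 0 j (Fin.zero_le j)
    omega
  · exact hs.trans (hT.2.2.2.2.1 0 i)

lemma mem_SC2Ge_row_succ_iff {s u a : ℕ} {T : TabT (a + 1) 0} :
    T ∈ SC2Ge s u (a + 1) 0 ↔ T ∈ SC2 (a + 1) 0 ∧ s ≤ T.2 0 :=
  ⟨fun hT => ⟨hT.1, hT.2.2 0⟩, fun ⟨hT, hs⟩ =>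
    ⟨hT, finZeroElim, fun i => hs.trans (hT.2.2.2.1 0 i (Fin.zero_le i))⟩⟩

lemma SC2Ge_four_eq_empty (u a b : ℕ) : SC2Ge 4 u a (b + 1) = ∅ := by
  refine Set.eq_empty_of_forall_notMem fun T hT => ?_
  have := hT.1.1 0
  have := hT.2.1 0
  omega

lemma SC2Ge_five_row_eq_empty (u a : ℕ) : SC2Ge 5 u (a + 1) 0 = ∅ := by
  refine Set.eq_empty_of_forall_notMem fun T hT => ?_
  have := hT.1.2.1 0
  have := hT.2.2 0
  omega

def consCol {a b : ℕ} (c : ℕ × ℕ) (T : TabT a b) : TabT a (b + 1) :=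
  (Fin.cons c T.1, T.2)

lemma consCol_injective {a b : ℕ} (c : ℕ × ℕ) : Injective (consCol c : TabT a b → _) :=
  fun _ _ h => Prod.ext (Fin.cons_right_injective (α := fun _ => ℕ × ℕ) c (Prod.ext_iff.mp h).1)
    (Prod.ext_iff.mp h).2

lemma rC2_consCol {a b : ℕ} (x y : ℕ) (T : TabT a b) :
    rC2 (consCol (x, y) T) = (3 - x) + (4 - y) + rC2 T := by
  simp only [rC2, consCol, Fin.sum_univ_succ, Fin.cons_zero, Fin.cons_succ]
  ring

lemma consCol_mem_SC2_iff {a b : ℕ} (c : ℕ × ℕ) (T : TabT a b) :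
    consCol c T ∈ SC2 a (b + 1) ↔
      (1 ≤ c.1 ∧ c.1 ≤ 4 ∧ 1 ≤ c.2 ∧ c.2 ≤ 4 ∧ c.1 < c.2) ∧ c ≠ (1, 4) ∧
      (∀ j, c.1 ≤ (T.1 j).1 ∧ c.2 ≤ (T.1 j).2) ∧ (∀ i, c.1 ≤ T.2 i) ∧
      (c = (2, 3) → ∀ j, T.1 j ≠ (2, 3)) ∧ T ∈ SC2 a b := by
  simp only [SC2, consCol, Set.mem_ofPred_eq, Fin.forall_fin_succ, Fin.cons_zero, Fin.cons_succ,
    Fin.succ_le_succ_iff, Fin.succ_inj, Fin.zero_le, Fin.le_zero_iff, Fin.succ_ne_zero,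
    (Fin.succ_ne_zero _).symm, le_refl, and_self, forall_const, false_implies, implies_true,
    true_and, imp_false, ne_eq, forall_and]
  tauto

def consEntry {a : ℕ} (e : ℕ) (T : TabT a 0) : TabT (a + 1) 0 :=
  (T.1, Fin.cons e T.2)

lemma consEntry_injective {a : ℕ} (e : ℕ) : Injective (consEntry e : TabT a 0 → _) :=
  fun _ _ h => Prod.ext (Prod.ext_iff.mp h).1
    (Fin.cons_right_injective (α := fun _ => ℕ) e (Prod.ext_iff.mp h).2)

lemma rC2_consEntry {a : ℕ} (e : ℕ) (T : TabT a 0) : rC2 (consEntry e T) = (4 - e) + rC2 T := by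
  simp only [rC2, consEntry, Fin.sum_univ_succ, Fin.cons_zero, Fin.cons_succ]
  ring

lemma consEntry_mem_SC2_iff {a : ℕ} (e : ℕ) (T : TabT a 0) :
    consEntry e T ∈ SC2 (a + 1) 0 ↔ (1 ≤ e ∧ e ≤ 4) ∧ (∀ i, e ≤ T.2 i) ∧ T ∈ SC2 a 0 := by
  simp only [SC2, consEntry, Set.mem_ofPred_eq, Fin.forall_fin_succ, Fin.cons_zero,
    Fin.cons_succ, Fin.succ_le_succ_iff, Fin.zero_le, Fin.le_zero_iff, Fin.succ_ne_zero,
    IsEmpty.forall_iff, le_refl, forall_const, true_and, and_true]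
  tauto

-- The at-most-one rule for `(2, 3)` becomes a lower bound `4` on all later bottom entries.
lemma le_col_and_ne_iff {x y v : ℕ} {d : ℕ × ℕ} (hd : d.1 < d.2 ∧ d.2 ≤ 4)
    (hv : v = if (x, y) = (2, 3) then 4 else y) :
    ((x ≤ d.1 ∧ y ≤ d.2) ∧ ((x, y) = (2, 3) → d ≠ (2, 3))) ↔ x ≤ d.1 ∧ v ≤ d.2 := by
  obtain ⟨p, q⟩ := d
  simp only [Prod.mk.injEq, ne_eq] at hd hv ⊢
  split_ifs at hv <;> omega

lemma SC2Ge_inter_firstCol {x y v a b : ℕ}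
    (hxy : 1 ≤ x ∧ x < y ∧ y ≤ 4 ∧ ¬(x = 1 ∧ y = 4))
    (hv : v = if (x, y) = (2, 3) then 4 else y) :
    SC2Ge x y a (b + 1) ∩ {T | T.1 0 = (x, y)} = consCol (x, y) '' SC2Ge x v a b := by
  have hcol {T : TabT a b} (hT : T ∈ SC2 a b) (j : Fin b) :=
    le_col_and_ne_iff (d := T.1 j) ⟨(hT.1 j).2.2.2.2, (hT.1 j).2.2.2.1⟩ hv
  ext T
  constructor
  · rintro ⟨hT, hT0 : T.1 0 = (x, y)⟩
    have hcons : consCol (x, y) (Fin.tail T.1, T.2) = T := by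
      rw [← hT0, consCol, Fin.cons_self_tail]
    rw [← hcons, mem_SC2Ge_succ_iff, consCol_mem_SC2_iff] at hT
    obtain ⟨⟨-, -, hcols, hrow, h23, hT'⟩, -⟩ := hT
    exact ⟨_, ⟨hT', fun j => (hcol hT' j).1 ⟨hcols j, fun h => h23 h j⟩, hrow⟩, hcons⟩
  · rintro ⟨T', ⟨hT', hcols, hrow⟩, rfl⟩
    refine ⟨mem_SC2Ge_succ_iff.2 ⟨(consCol_mem_SC2_iff _ _).2
      ⟨?_, ?_, fun j => ((hcol hT' j).2 (hcols j)).1, hrow,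
        fun h j => ((hcol hT' j).2 (hcols j)).2 h, hT'⟩, le_rfl, le_rfl⟩, rfl⟩
    · simp only
      omega
    · simp only [ne_eq, Prod.mk.injEq]
      exact hxy.2.2.2

lemma SC2Ge_diff_firstCol {x y s' u' a b : ℕ}
    (hnext : ∀ p q : ℕ, p < q → q ≤ 4 → ¬(p = 1 ∧ q = 4) →
      ((x ≤ p ∧ y ≤ q) ∧ ¬(p = x ∧ q = y) ↔ s' ≤ p ∧ u' ≤ q)) :
    SC2Ge x y a (b + 1) \ {T | T.1 0 = (x, y)} = SC2Ge s' u' a (b + 1) := by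
  ext T
  simp only [Set.mem_sdiff, mem_SC2Ge_succ_iff, Set.mem_ofPred_eq, Prod.ext_iff]
  have hnext₀ {T : TabT a (b + 1)} (hT : T ∈ SC2 a (b + 1)) :=
    hnext _ _ (hT.1 0).2.2.2.2 (hT.1 0).2.2.2.1 (Prod.ext_iff.not.mp (hT.2.2.2.2.2.1 0))
  exact ⟨fun ⟨⟨hT, hge⟩, hne⟩ => ⟨hT, (hnext₀ hT).1 ⟨hge, hne⟩⟩,
    fun ⟨hT, hge⟩ => ⟨⟨hT, ((hnext₀ hT).2 hge).1⟩, ((hnext₀ hT).2 hge).2⟩⟩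

lemma SC2Ge_row_inter_firstEntry {t u a : ℕ} (ht : 1 ≤ t ∧ t ≤ 4) :
    SC2Ge t u (a + 1) 0 ∩ {T | T.2 0 = t} = consEntry t '' SC2Ge t u a 0 := by
  ext T
  constructor
  · rintro ⟨hT, hT0 : T.2 0 = t⟩
    have hcons : consEntry t (T.1, Fin.tail T.2) = T := by
      rw [← hT0, consEntry, Fin.cons_self_tail]
    rw [← hcons, mem_SC2Ge_row_succ_iff, consEntry_mem_SC2_iff] at hT
    exact ⟨_, ⟨hT.1.2.2, finZeroElim, hT.1.2.1⟩, hcons⟩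
  · rintro ⟨T', ⟨hT', -, hrow⟩, rfl⟩
    exact ⟨mem_SC2Ge_row_succ_iff.2 ⟨(consEntry_mem_SC2_iff _ _).2 ⟨ht, hrow, hT'⟩, le_rfl⟩, rfl⟩

lemma SC2Ge_row_diff_firstEntry (t u a : ℕ) :
    SC2Ge t u (a + 1) 0 \ {T | T.2 0 = t} = SC2Ge (t + 1) u (a + 1) 0 := by
  ext T
  simp only [Set.mem_sdiff, mem_SC2Ge_row_succ_iff, Set.mem_ofPred_eq]
  exact ⟨fun ⟨⟨hT, h⟩, hne⟩ => ⟨hT, by omega⟩, fun ⟨hT, h⟩ => ⟨⟨hT, by omega⟩, by omega⟩⟩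

noncomputable def rankGF {a b : ℕ} (S : Set (TabT a b)) : ℤ[X] :=
  ∑ᶠ T ∈ S, X ^ rC2 T

lemma rankGF_empty {a b : ℕ} : rankGF (∅ : Set (TabT a b)) = 0 :=
  finsum_mem_empty

lemma rankGF_image {a b a' b' : ℕ} (S : Set (TabT a b)) {f : TabT a b → TabT a' b'}
    (hf : Injective f) {w : ℕ} (hw : ∀ T, rC2 (f T) = w + rC2 T) :
    rankGF (f '' S) = X ^ w * rankGF S := by
  simp only [rankGF, finsum_mem_image hf.injOn, mul_finsum_mem, hw, pow_add]

-- `(s', u')` is the column following `(x, y)` in the chain of admissible columns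
-- (`(4, 5)` after `(3, 4)`).
lemma rankGF_SC2Ge_col_succ {x y v s' u' a b : ℕ}
    (hxy : 1 ≤ x ∧ x < y ∧ y ≤ 4 ∧ ¬(x = 1 ∧ y = 4))
    (hv : v = if (x, y) = (2, 3) then 4 else y)
    (hnext : ∀ p q : ℕ, p < q → q ≤ 4 → ¬(p = 1 ∧ q = 4) →
      ((x ≤ p ∧ y ≤ q) ∧ ¬(p = x ∧ q = y) ↔ s' ≤ p ∧ u' ≤ q)) :
    rankGF (SC2Ge x y a (b + 1)) =
      X ^ ((3 - x) + (4 - y)) * rankGF (SC2Ge x v a b) + rankGF (SC2Ge s' u' a (b + 1)) := by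
  rw [← SC2Ge_diff_firstCol hnext, ← rankGF_image _ (consCol_injective _) (rC2_consCol x y),
    ← SC2Ge_inter_firstCol hxy hv]
  exact (finsum_mem_inter_add_sdiff _ (SC2Ge_finite _ _ _ _)).symm

lemma rankGF_SC2Ge_row_succ {t u a : ℕ} (ht : 1 ≤ t ∧ t ≤ 4) :
    rankGF (SC2Ge t u (a + 1) 0) =
      X ^ (4 - t) * rankGF (SC2Ge t u a 0) + rankGF (SC2Ge (t + 1) u (a + 1) 0) := by
  rw [← SC2Ge_row_diff_firstEntry, ← rankGF_image _ (consEntry_injective _) (rC2_consEntry t),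
    ← SC2Ge_row_inter_firstEntry ht]
  exact (finsum_mem_inter_add_sdiff _ (SC2Ge_finite _ _ _ _)).symm

lemma rankGF_SC2Ge_zero_zero (s u : ℕ) : rankGF (SC2Ge s u 0 0) = 1 := by
  have : SC2Ge s u 0 0 = {(finZeroElim, finZeroElim)} := by
    refine Set.eq_singleton_iff_unique_mem.2 ⟨?_, fun T _ => Subsingleton.elim _ _⟩
    exact ⟨⟨finZeroElim, finZeroElim, finZeroElim, finZeroElim, finZeroElim, finZeroElim,
      finZeroElim⟩, finZeroElim, finZeroElim⟩
  rw [rankGF, this, finsum_mem_singleton]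
  simp [rC2]

lemma rankGF_SC2Ge_row_four (u a : ℕ) : rankGF (SC2Ge 4 u a 0) = 1 := by
  induction a with
  | zero => exact rankGF_SC2Ge_zero_zero 4 u
  | succ a ih =>
    rw [rankGF_SC2Ge_row_succ (by norm_num), ih, SC2Ge_five_row_eq_empty, rankGF_empty]
    ring

lemma rankGF_SC2Ge_row_three (u a : ℕ) :
    rankGF (SC2Ge 3 u a 0) * (1 - X) = 1 - X ^ (a + 1) := by
  induction a with
  | zero => rw [rankGF_SC2Ge_zero_zero]; ring
  | succ a ih =>
    rw [rankGF_SC2Ge_row_succ (by norm_num), rankGF_SC2Ge_row_four]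
    linear_combination X * ih

lemma rankGF_SC2Ge_row_two (u a : ℕ) :
    rankGF (SC2Ge 2 u a 0) * ((1 - X) * (1 - X ^ 2)) = (1 - X ^ (a + 1)) * (1 - X ^ (a + 2)) := by
  induction a with
  | zero => rw [rankGF_SC2Ge_zero_zero]; ring
  | succ a ih =>
    rw [rankGF_SC2Ge_row_succ (by norm_num)]
    linear_combination X ^ 2 * ih + (1 - X ^ 2) * rankGF_SC2Ge_row_three u (a + 1)

lemma rankGF_SC2Ge_row_one (u a : ℕ) :
    rankGF (SC2Ge 1 u a 0) * ((1 - X) * (1 - X ^ 2) * (1 - X ^ 3)) =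
      (1 - X ^ (a + 1)) * (1 - X ^ (a + 2)) * (1 - X ^ (a + 3)) := by
  induction a with
  | zero => rw [rankGF_SC2Ge_zero_zero]; ring
  | succ a ih =>
    rw [rankGF_SC2Ge_row_succ (by norm_num)]
    linear_combination X ^ 3 * ih + (1 - X ^ 3) * rankGF_SC2Ge_row_two u (a + 1)

lemma rankGF_SC2Ge_three_four (a b : ℕ) :
    rankGF (SC2Ge 3 4 a b) * (1 - X) = 1 - X ^ (a + 1) := by
  induction b with
  | zero => exact rankGF_SC2Ge_row_three 4 a
  | succ b ih =>
    rw [rankGF_SC2Ge_col_succ (x := 3) (y := 4) (v := 4) (s' := 4) (u' := 5)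
      (by omega) (by decide) (by intros; omega), SC2Ge_four_eq_empty, rankGF_empty]
    linear_combination ih

lemma rankGF_SC2Ge_two_four (a b : ℕ) :
    rankGF (SC2Ge 2 4 a b) * ((1 - X) * (1 - X ^ 2)) =
      X ^ b * ((1 - X ^ (a + 1)) * (1 - X ^ (a + 2))) +
        (1 - X ^ (a + 1)) * (1 - X ^ b) * (1 + X) := by
  induction b with
  | zero => linear_combination rankGF_SC2Ge_row_two 4 a
  | succ b ih =>
    rw [rankGF_SC2Ge_col_succ (x := 2) (y := 4) (v := 4) (s' := 3) (u' := 4)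
      (by omega) (by decide) (by intros; omega)]
    linear_combination X * ih + (1 - X ^ 2) * rankGF_SC2Ge_three_four a (b + 1)

-- This is `P b - X ^ 4 * P (b - 1)` for the product `P b` of the main theorem, with `P (-1) = 0`.
lemma rankGF_SC2Ge_one_three (a b : ℕ) :
    rankGF (SC2Ge 1 3 a b) * ((1 - X) * (1 - X) * (1 - X ^ 2) * (1 - X ^ 3)) =
      (1 - X ^ (a + 1)) * (1 - X ^ (b + 1)) * (1 - X ^ (a + b + 2)) * (1 - X ^ (a + 2 * b + 3)) -
        X ^ 4 * ((1 - X ^ (a + 1)) * (1 - X ^ b) * (1 - X ^ (a + b + 1)) *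
          (1 - X ^ (a + 2 * b + 1))) := by
  induction b with
  | zero => linear_combination (1 - X) * rankGF_SC2Ge_row_one 3 a
  | succ b ih =>
    rw [rankGF_SC2Ge_col_succ (x := 1) (y := 3) (v := 3) (s' := 2) (u' := 3)
      (by omega) (by decide) (by intros; omega),
      rankGF_SC2Ge_col_succ (x := 2) (y := 3) (v := 4) (s' := 2) (u' := 4)
      (by omega) (by decide) (by intros; omega)]
    linear_combination X ^ 3 * ih + X ^ 2 * (1 - X) * (1 - X ^ 3) * rankGF_SC2Ge_two_four a b +
      (1 - X) * (1 - X ^ 3) * rankGF_SC2Ge_two_four a (b + 1)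

/-- The rank generating function of the lattice of `C2`-semistandard tableaux of
shape `(a,b)` satisfies
`(Σ_T q^{r(T)}) (1−q)(1−q)(1−q²)(1−q³)
  = (1−q^{a+1})(1−q^{b+1})(1−q^{a+b+2})(1−q^{a+2b+3})`. -/
theorem C2_rank_generating_function (a b : ℕ) :
    (∑ᶠ T ∈ SC2 a b, (Polynomial.X : Polynomial ℤ) ^ rC2 T) *
        ((1 - Polynomial.X) * (1 - Polynomial.X) * (1 - Polynomial.X ^ 2) *
          (1 - Polynomial.X ^ 3)) =
      (1 - Polynomial.X ^ (a + 1)) * (1 - Polynomial.X ^ (b + 1)) *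
        (1 - Polynomial.X ^ (a + b + 2)) * (1 - Polynomial.X ^ (a + 2 * b + 3)) := by
  rw [← SC2Ge_one_two]
  change rankGF _ * _ = _
  induction b with
  | zero => linear_combination (1 - X) * rankGF_SC2Ge_row_one 2 a
  | succ b ih =>
    rw [rankGF_SC2Ge_col_succ (x := 1) (y := 2) (v := 2) (s' := 1) (u' := 3)
      (by omega) (by decide) (by intros; omega)]
    linear_combination X ^ 4 * ih + rankGF_SC2Ge_one_three a (b + 1)
end
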